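/- arXiv:1207.4984 — 11 statements merged into one kernel-verified Lean document; each statement's English description precedes it below -/
import Mathlib

section
/- Let A be an LTS over Σ = Σl ⊎ Σh such that the restriction A\Σh is deterministic. If A is SNNI then A is CSNNI. -/
open Classical

/-- The set of words over `A` all of whose letters lie in `Γ` (i.e. `Γ*`). -/
def starLang {A : Type*} (Γ : Set A) : Set (List A) := {w | ∀ a ∈ w, a ∈ Γ}

/-- Projection of a word onto the letters in `Γ` (deleting all other letters). -/
noncomputable def projWord {A : Type*} (Γ : Set A) : List A → List A
  | [] => []
  | a :: w => if a ∈ Γ then a :: projWord Γ w else projWord Γ w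

/-- Projection of a language onto the letters in `Γ`. -/
def projLang {A : Type*} (Γ : Set A) (L : Set (List A)) : Set (List A) :=
  projWord Γ '' L

/-- A labelled transition system over alphabet `A` with state space `S`;
the label `none` is the silent label ε. -/
structure LTS (A : Type*) (S : Type*) where
  init : S
  trans : S → Option A → S → Prop

namespace LTS

variable {A S S1 S2 : Type*}

/-- `q ⇒ε q'`: reachability by a finite (possibly empty) sequence of ε-transitions. -/
def EpsReach (T : LTS A S) : S → S → Prop :=
  Relation.ReflTransGen (fun q q' => T.trans q none q')

/-- `q ⇒a q'`: a weak step labelled `a`. -/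
def WStep (T : LTS A S) (a : A) (q q' : S) : Prop :=
  ∃ q1 q2, T.EpsReach q q1 ∧ T.trans q1 (some a) q2 ∧ T.EpsReach q2 q'

/-- `Reaches T s w t`: there is a finite run from `s` to `t` whose trace
(the list of non-ε labels) is `w`. -/
inductive Reaches (T : LTS A S) : S → List A → S → Prop
  | refl (s : S) : Reaches T s [] s
  | eps {s s' : S} {w : List A} {t : S} :
      T.trans s none s' → Reaches T s' w t → Reaches T s w t
  | step {s s' : S} {a : A} {w : List A} {t : S} :
      T.trans s (some a) s' → Reaches T s' w t → Reaches T s (a :: w) t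

/-- The language of an LTS: traces of all finite runs from the initial state. -/
def lang (T : LTS A S) : Set (List A) := {w | ∃ t, T.Reaches T.init w t}

/-- Hiding `T/E`: relabel to ε every transition whose label lies in `E`. -/
def hide (T : LTS A S) (E : Set A) : LTS A S where
  init := T.init
  trans s l s' :=
    match l with
    | none => T.trans s none s' ∨ ∃ a ∈ E, T.trans s (some a) s'
    | some a => a ∉ E ∧ T.trans s (some a) s'

/-- Restriction `T\E`: delete every transition whose label lies in `E`. -/
def restrict (T : LTS A S) (E : Set A) : LTS A S where
  init := T.init
  trans s l s' := T.trans s l s' ∧ ∀ a, l = some a → a ∉ E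

/-- `R` is a weak simulation of `T2` by `T1`. -/
def IsWeakSimOf (T1 : LTS A S1) (T2 : LTS A S2) (R : S1 → S2 → Prop) : Prop :=
  R T1.init T2.init ∧
  ∀ s p, R s p →
    (∀ p', T2.EpsReach p p' → ∃ s', T1.EpsReach s s' ∧ R s' p') ∧
    (∀ a p', T2.WStep a p p' → ∃ s', T1.WStep a s s' ∧ R s' p')

/-- `T1` weakly simulates `T2`. -/
def Simulates (T1 : LTS A S1) (T2 : LTS A S2) : Prop :=
  ∃ R, T1.IsWeakSimOf T2 R

/-- `T1` and `T2` are weakly bisimilar. -/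
def Bisimilar (T1 : LTS A S1) (T2 : LTS A S2) : Prop :=
  ∃ R, T1.IsWeakSimOf T2 R ∧ T2.IsWeakSimOf T1 (fun p s => R s p)

/-- Deterministic: no ε-transitions and at most one successor per label. -/
def Deterministic (T : LTS A S) : Prop :=
  (∀ s s', ¬ T.trans s none s') ∧
  ∀ s a s' s'', T.trans s (some a) s' → T.trans s (some a) s'' → s' = s''

/-- ε-free: no ε-labelled transition. -/
def EpsFree (T : LTS A S) : Prop := ∀ s s', ¬ T.trans s none s'

/-- Strong non-deterministic non-interference. -/
def SNNI (T : LTS A S) (Sh : Set A) : Prop :=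
  (T.restrict Sh).lang = (T.hide Sh).lang

/-- Cosimulation-based SNNI. -/
def CSNNI (T : LTS A S) (Sh : Set A) : Prop :=
  (T.restrict Sh).Simulates (T.hide Sh) ∧ (T.hide Sh).Simulates (T.restrict Sh)

/-- Bisimulation-based SNNI. -/
def BSNNI (T : LTS A S) (Sh : Set A) : Prop :=
  (T.restrict Sh).Bisimilar (T.hide Sh)

end LTS

namespace LTS

variable {A S : Type*}

theorem reaches_trans' {T : LTS A S} {s t u : S} {w v : List A}
    (h1 : T.Reaches s w t) (h2 : T.Reaches t v u) : T.Reaches s (w ++ v) u := by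
  induction h1 with
  | refl => simpa using h2
  | eps h _ ih => exact Reaches.eps h (ih h2)
  | step h _ ih => exact Reaches.step h (ih h2)

theorem epsReach_reaches' {T : LTS A S} {s t : S} (h : T.EpsReach s t) :
    T.Reaches s [] t := by
  induction h using Relation.ReflTransGen.head_induction_on with
  | refl => exact Reaches.refl _
  | head h _ ih => exact Reaches.eps h ih

theorem wstep_reaches' {T : LTS A S} {a : A} {s t : S} (h : T.WStep a s t) :
    T.Reaches s [a] t := by
  obtain ⟨q1, q2, h1, h2, h3⟩ := h
  have := reaches_trans' (epsReach_reaches' h1)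
    (Reaches.step h2 (epsReach_reaches' h3))
  simpa using this

theorem epsFree_reaches_nil' {T : LTS A S} (hE : T.EpsFree) {s t : S}
    (h : T.Reaches s [] t) : s = t := by
  cases h with
  | refl => rfl
  | eps h _ => exact absurd h (hE _ _)

theorem epsFree_reaches_snoc' {T : LTS A S} (hE : T.EpsFree) {s t : S} {v : List A}
    (h : T.Reaches s v t) : ∀ w a, v = w ++ [a] →
    ∃ u, T.Reaches s w u ∧ T.trans u (some a) t := by
  induction h with
  | refl s => intro w a hw; exact absurd hw (by simp)
  | eps h _ _ => exact absurd h (hE _ _)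
  | step h hr ih =>
    intro w a hw
    cases w with
    | nil =>
      simp only [List.nil_append, List.cons.injEq] at hw
      obtain ⟨rfl, rfl⟩ := hw
      obtain rfl := epsFree_reaches_nil' hE hr
      exact ⟨_, Reaches.refl _, h⟩
    | cons b w' =>
      simp only [List.cons_append, List.cons.injEq] at hw
      obtain ⟨rfl, rfl⟩ := hw
      obtain ⟨u, hu, htr⟩ := ih w' a rfl
      exact ⟨u, Reaches.step h hu, htr⟩

theorem det_reaches_unique' {T : LTS A S} (hdet : T.Deterministic) {s : S} {w : List A}
    {t t' : S} (h1 : T.Reaches s w t) (h2 : T.Reaches s w t') : t = t' := by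
  induction h1 generalizing t' with
  | refl s => exact epsFree_reaches_nil' hdet.1 h2
  | eps h _ _ => exact absurd h (hdet.1 _ _)
  | step h _ ih =>
    cases h2 with
    | eps h2 _ => exact absurd h2 (hdet.1 _ _)
    | step h2 hr2 =>
      obtain rfl := hdet.2 _ _ _ _ h h2
      exact ih hr2

end LTS

theorem stmt8 {A S : Type*} (Sl Sh : Set A)
    (hcover : Sl ∪ Sh = Set.univ) (hdisj : Disjoint Sl Sh)
    (T : LTS A S) (hdet : (T.restrict Sh).Deterministic)
    (h : T.SNNI Sh) : T.CSNNI Sh := by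
  constructor
  · -- restrict simulates hide
    refine ⟨fun s p => ∃ w, (T.restrict Sh).Reaches (T.restrict Sh).init w s ∧
      (T.hide Sh).Reaches (T.hide Sh).init w p,
      ⟨[], LTS.Reaches.refl _, LTS.Reaches.refl _⟩, ?_⟩
    rintro s p ⟨w, hs, hp⟩
    constructor
    · intro p' hp'
      refine ⟨s, Relation.ReflTransGen.refl, w, hs, ?_⟩
      simpa using LTS.reaches_trans' hp (LTS.epsReach_reaches' hp')
    · intro a p' hp'
      have hpp : (T.hide Sh).Reaches (T.hide Sh).init (w ++ [a]) p' :=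
        LTS.reaches_trans' hp (LTS.wstep_reaches' hp')
      have hmem : w ++ [a] ∈ (T.hide Sh).lang := ⟨p', hpp⟩
      rw [← h] at hmem
      obtain ⟨t, ht⟩ := hmem
      obtain ⟨u, hu, htrans⟩ := LTS.epsFree_reaches_snoc' hdet.1 ht w a rfl
      obtain rfl := LTS.det_reaches_unique' hdet hu hs
      exact ⟨t, ⟨u, t, Relation.ReflTransGen.refl, htrans, Relation.ReflTransGen.refl⟩,
        w ++ [a], ht, hpp⟩
  · -- hide simulates restrict via identity
    refine ⟨fun p s => p = s, rfl, ?_⟩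
    rintro p s rfl
    have hmono : ∀ q q', (T.restrict Sh).EpsReach q q' → (T.hide Sh).EpsReach q q' :=
      fun q q' hq => Relation.ReflTransGen.mono (fun a b hab => Or.inl hab.1) q q' hq
    constructor
    · intro s' hs'
      exact ⟨s', hmono _ _ hs', rfl⟩
    · intro a s' hs'
      obtain ⟨q1, q2, h1, h2, h3⟩ := hs'
      exact ⟨s', ⟨q1, q2, hmono _ _ h1, ⟨h2.2 a rfl, h2.1⟩, hmono _ _ h3⟩, rfl⟩
end

section
/- SNNI is preserved under alphabet restriction: let Σ = Σl ⊎ Σh and let L ⊆ Σ* satisfy proj_Σl(L) = L ∩ Σl*. Then for every Γ ⊆ Σ, proj_Σl(L ∩ Γ*) = (L ∩ Γ*) ∩ Σl*. -/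
open Classical

lemma projWord_mem_sub {A : Type*} (Γ : Set A) (w : List A) :
    ∀ a ∈ projWord Γ w, a ∈ w := by
  induction w with
  | nil => simp [projWord]
  | cons b t ih =>
    intro a ha
    by_cases hb : b ∈ Γ
    · simp [projWord, hb] at ha
      rcases ha with h | h
      · simp [h]
      · exact List.mem_cons_of_mem _ (ih a h)
    · simp [projWord, hb] at ha
      exact List.mem_cons_of_mem _ (ih a ha)

lemma projWord_id {A : Type*} (Γ : Set A) (w : List A) (h : ∀ a ∈ w, a ∈ Γ) :
    projWord Γ w = w := by
  induction w with
  | nil => rfl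
  | cons b t ih =>
    have hb : b ∈ Γ := h b List.mem_cons_self
    simp [projWord, hb, ih fun a ha => h a (List.mem_cons_of_mem _ ha)]

theorem stmt9 {A : Type*} (Sl Sh : Set A)
    (hcover : Sl ∪ Sh = Set.univ) (hdisj : Disjoint Sl Sh)
    (L : Set (List A))
    (hsnni : projLang Sl L = L ∩ starLang Sl) (Γ : Set A) :
    projLang Sl (L ∩ starLang Γ) = (L ∩ starLang Γ) ∩ starLang Sl := by
  ext v
  constructor
  · rintro ⟨w, ⟨hwL, hwΓ⟩, rfl⟩
    have h1 : projWord Sl w ∈ projLang Sl L := ⟨w, hwL, rfl⟩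
    rw [hsnni] at h1
    exact ⟨⟨h1.1, fun a ha => hwΓ a (projWord_mem_sub Sl w a ha)⟩, h1.2⟩
  · rintro ⟨⟨hvL, hvΓ⟩, hvSl⟩
    exact ⟨v, ⟨hvL, hvΓ⟩, projWord_id Sl v hvSl⟩
end

section
/- Let Σ = Σl ⊎ Σh, let Σc ⊆ Σ be the controllable letters and Σu = Σ \ Σc the uncontrollable ones. Let L ⊆ Σ* (the behaviours of the plant) and suppose M ⊆ Σ* is a controlled behaviour, i.e. M ⊆ L and L ∩ Σu* ⊆ M. If M is SNNI (proj_Σl(M) = M ∩ Σl*), then L ∩ Σu* is SNNI, i.e. proj_Σl(L ∩ Σu*) = (L ∩ Σu*) ∩ Σl*. In particular, some controlled behaviour of L is SNNI if and only if the fully restricted behaviour L ∩ Σu* is SNNI. -/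
open Classical

lemma projWord_mem_starLang {A : Type*} (Γ Δ : Set A) {w : List A}
    (hw : w ∈ starLang Δ) : projWord Γ w ∈ starLang Δ := by
  induction w with
  | nil => exact hw
  | cons a w ih =>
    have ha : a ∈ Δ := hw a (List.mem_cons_self (a := a) (l := w))
    have hw' : w ∈ starLang Δ := fun b hb => hw b (List.mem_cons_of_mem _ hb)
    simp only [projWord]
    split
    · intro b hb
      rcases List.mem_cons.mp hb with h | h
      · exact h ▸ ha
      · exact ih hw' b h
    · exact ih hw'

lemma projWord_starLang {A : Type*} (Γ : Set A) (w : List A) :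
    projWord Γ w ∈ starLang Γ := by
  induction w with
  | nil => intro a ha; simp [projWord] at ha
  | cons a w ih =>
    simp only [projWord]
    split
    · intro b hb
      rcases List.mem_cons.mp hb with h | h
      · exact h ▸ ‹a ∈ Γ›
      · exact ih b h
    · exact ih

lemma projWord_of_starLang {A : Type*} (Γ : Set A) {w : List A}
    (hw : w ∈ starLang Γ) : projWord Γ w = w := by
  induction w with
  | nil => rfl
  | cons a w ih =>
    have ha : a ∈ Γ := hw a (List.mem_cons_self (a := a) (l := w))
    have hw' : w ∈ starLang Γ := fun b hb => hw b (List.mem_cons_of_mem _ hb)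
    simp [projWord, ha, ih hw']

lemma snni_restrict {A : Type*} (Sl Sc : Set A) (L : Set (List A))
    (M : Set (List A)) (hML : M ⊆ L) (hLM : L ∩ starLang Scᶜ ⊆ M)
    (hM : projLang Sl M = M ∩ starLang Sl) :
    projLang Sl (L ∩ starLang Scᶜ) = (L ∩ starLang Scᶜ) ∩ starLang Sl := by
  ext v
  constructor
  · rintro ⟨w, ⟨hwL, hwU⟩, rfl⟩
    have hwM : w ∈ M := hLM ⟨hwL, hwU⟩
    have hproj : projWord Sl w ∈ M ∩ starLang Sl := by
      rw [← hM]; exact ⟨w, hwM, rfl⟩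
    exact ⟨⟨hML hproj.1, projWord_mem_starLang Sl _ hwU⟩, projWord_starLang Sl w⟩
  · rintro ⟨hv, hvl⟩
    exact ⟨v, hv, projWord_of_starLang Sl hvl⟩

theorem stmt10 {A : Type*} (Sl Sh : Set A)
    (hcover : Sl ∪ Sh = Set.univ) (hdisj : Disjoint Sl Sh)
    (Sc : Set A) (L : Set (List A)) :
    (∀ M : Set (List A), M ⊆ L → L ∩ starLang Scᶜ ⊆ M →
        projLang Sl M = M ∩ starLang Sl →
        projLang Sl (L ∩ starLang Scᶜ) = (L ∩ starLang Scᶜ) ∩ starLang Sl) ∧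
    ((∃ M : Set (List A), M ⊆ L ∧ L ∩ starLang Scᶜ ⊆ M ∧
        projLang Sl M = M ∩ starLang Sl) ↔
      projLang Sl (L ∩ starLang Scᶜ) = (L ∩ starLang Scᶜ) ∩ starLang Sl) := by
  constructor
  · intro M h1 h2 h3
    exact snni_restrict Sl Sc L M h1 h2 h3
  · constructor
    · rintro ⟨M, h1, h2, h3⟩
      exact snni_restrict Sl Sc L M h1 h2 h3
    · intro h
      exact ⟨L ∩ starLang Scᶜ, Set.inter_subset_left, le_refl _, h⟩
end

section
/- CSNNI is preserved under restriction: if an LTS A over Σ = Σl ⊎ Σh is CSNNI, then for every Γ ⊆ Σ the restriction A\Γ is CSNNI (for the induced partition of the alphabet). -/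
open Classical

section Aux

variable {A S1 S2 : Type*}

lemma restrict_trans_iff (T : LTS A S1) (Γ : Set A) (s : S1) (l : Option A) (s' : S1) :
    (T.restrict Γ).trans s l s' ↔ T.trans s l s' ∧ ∀ a, l = some a → a ∉ Γ := Iff.rfl

lemma hide_trans_none_iff (T : LTS A S1) (E : Set A) (s s' : S1) :
    (T.hide E).trans s none s' ↔ T.trans s none s' ∨ ∃ a ∈ E, T.trans s (some a) s' :=
  Iff.rfl

lemma hide_trans_some_iff (T : LTS A S1) (E : Set A) (s : S1) (a : A) (s' : S1) :
    (T.hide E).trans s (some a) s' ↔ a ∉ E ∧ T.trans s (some a) s' := Iff.rfl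

lemma epsReach_mono {T T' : LTS A S1}
    (h : ∀ s s', T.trans s none s' → T'.trans s none s') {q q' : S1}
    (hr : T.EpsReach q q') : T'.EpsReach q q' :=
  Relation.ReflTransGen.mono (fun a b hb => h a b hb) _ _ hr

lemma epsReach_restrict {T : LTS A S1} {Γ : Set A} {q q' : S1} :
    (T.restrict Γ).EpsReach q q' ↔ T.EpsReach q q' := by
  constructor
  · exact epsReach_mono (fun s s' hs => ((restrict_trans_iff T Γ s none s').mp hs).1)
  · exact epsReach_mono (fun s s' hs => (restrict_trans_iff T Γ s none s').mpr
      ⟨hs, fun a ha => by cases ha⟩)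

lemma isWeakSimOf_mono {T1 T1' : LTS A S1} {T2 T2' : LTS A S2} {R : S1 → S2 → Prop}
    (h1 : ∀ s l s', T1.trans s l s' → T1'.trans s l s')
    (h2 : ∀ s l s', T2'.trans s l s' → T2.trans s l s')
    (e1 : T1'.init = T1.init) (e2 : T2'.init = T2.init)
    (h : T1.IsWeakSimOf T2 R) : T1'.IsWeakSimOf T2' R := by
  obtain ⟨hinit, hstep⟩ := h
  refine ⟨by rw [e1, e2]; exact hinit, fun s p hsp => ?_⟩
  obtain ⟨he, hw⟩ := hstep s p hsp
  constructor
  · intro p' hp'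
    obtain ⟨s', hs', hr⟩ := he p' (epsReach_mono (fun a b => h2 a none b) hp')
    exact ⟨s', epsReach_mono (fun a b => h1 a none b) hs', hr⟩
  · intro a p' hp'
    obtain ⟨p1, p2, g1, g2, g3⟩ := hp'
    obtain ⟨s', hs', hr⟩ := hw a p' ⟨p1, p2,
      epsReach_mono (fun a b => h2 a none b) g1, h2 _ _ _ g2,
      epsReach_mono (fun a b => h2 a none b) g3⟩
    obtain ⟨s1, s2, f1, f2, f3⟩ := hs'
    exact ⟨s', ⟨s1, s2, epsReach_mono (fun a b => h1 a none b) f1, h1 _ _ _ f2,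
      epsReach_mono (fun a b => h1 a none b) f3⟩, hr⟩

lemma isWeakSimOf_refl (T : LTS A S1) : T.IsWeakSimOf T Eq := by
  refine ⟨rfl, fun s p hsp => ?_⟩
  subst hsp
  exact ⟨fun p' hp' => ⟨p', hp', rfl⟩, fun a p' hp' => ⟨p', hp', rfl⟩⟩

lemma isWeakSimOf_restrict {T1 : LTS A S1} {T2 : LTS A S2} {R : S1 → S2 → Prop}
    (h : T1.IsWeakSimOf T2 R) (Γ : Set A) :
    (T1.restrict Γ).IsWeakSimOf (T2.restrict Γ) R := by
  obtain ⟨hinit, hstep⟩ := h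
  refine ⟨hinit, fun s p hsp => ?_⟩
  obtain ⟨he, hw⟩ := hstep s p hsp
  constructor
  · intro p' hp'
    obtain ⟨s', hs', hr⟩ := he p' (epsReach_restrict.mp hp')
    exact ⟨s', epsReach_restrict.mpr hs', hr⟩
  · intro a p' hp'
    obtain ⟨p1, p2, g1, g2, g3⟩ := hp'
    obtain ⟨g2t, g2r⟩ := (restrict_trans_iff T2 Γ p1 (some a) p2).mp g2
    have haΓ : a ∉ Γ := g2r a rfl
    obtain ⟨s', hs', hr⟩ := hw a p' ⟨p1, p2, epsReach_restrict.mp g1, g2t,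
      epsReach_restrict.mp g3⟩
    obtain ⟨s1, s2, f1, f2, f3⟩ := hs'
    exact ⟨s', ⟨s1, s2, epsReach_restrict.mpr f1,
      (restrict_trans_iff T1 Γ s1 (some a) s2).mpr
        ⟨f2, fun b hb => by injection hb with hb; exact hb ▸ haΓ⟩,
      epsReach_restrict.mpr f3⟩, hr⟩

end Aux

theorem stmt12 {A S : Type*} (Sl Sh : Set A)
    (hcover : Sl ∪ Sh = Set.univ) (hdisj : Disjoint Sl Sh)
    (T : LTS A S) (h : T.CSNNI Sh) (Γ : Set A) :
    (T.restrict Γ).CSNNI Sh := by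
  obtain ⟨h1, _⟩ := h
  constructor
  · obtain ⟨R, hR⟩ := h1
    refine ⟨R, isWeakSimOf_mono (T1 := (T.restrict Sh).restrict Γ)
      (T2 := (T.hide Sh).restrict Γ) ?_ ?_ rfl rfl (isWeakSimOf_restrict hR Γ)⟩
    · intro s l s' hs
      obtain ⟨⟨ht, hSh⟩, hΓ⟩ := (restrict_trans_iff _ _ _ _ _).mp hs
      exact (restrict_trans_iff _ _ _ _ _).mpr ⟨(restrict_trans_iff _ _ _ _ _).mpr
        ⟨ht, hΓ⟩, hSh⟩
    · intro s l s' hs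
      cases l with
      | none =>
        rcases (hide_trans_none_iff _ _ _ _).mp hs with ht | ⟨b, hb, ht⟩
        · obtain ⟨ht, _⟩ := (restrict_trans_iff _ _ _ _ _).mp ht
          exact (restrict_trans_iff _ _ _ _ _).mpr
            ⟨(hide_trans_none_iff _ _ _ _).mpr (Or.inl ht),
             fun a ha => by cases ha⟩
        · obtain ⟨ht, _⟩ := (restrict_trans_iff _ _ _ _ _).mp ht
          exact (restrict_trans_iff _ _ _ _ _).mpr
            ⟨(hide_trans_none_iff _ _ _ _).mpr (Or.inr ⟨b, hb, ht⟩),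
             fun a ha => by cases ha⟩
      | some a =>
        obtain ⟨haSh, ht⟩ := (hide_trans_some_iff _ _ _ _ _).mp hs
        obtain ⟨ht, hΓ⟩ := (restrict_trans_iff _ _ _ _ _).mp ht
        exact (restrict_trans_iff _ _ _ _ _).mpr
          ⟨(hide_trans_some_iff _ _ _ _ _).mpr ⟨haSh, ht⟩, hΓ⟩
  · refine ⟨Eq, isWeakSimOf_mono (T1 := (T.restrict Γ).restrict Sh)
      (T2 := (T.restrict Γ).restrict Sh) ?_ (fun s l s' hs => hs) rfl rfl
      (isWeakSimOf_refl ((T.restrict Γ).restrict Sh))⟩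
    intro s l s' hs
    obtain ⟨ht, hSh⟩ := (restrict_trans_iff _ _ _ _ _).mp hs
    cases l with
    | none => exact (hide_trans_none_iff _ _ _ _).mpr (Or.inl ht)
    | some a => exact (hide_trans_some_iff _ _ _ _ _).mpr ⟨hSh a rfl, ht⟩
end

section
/- The gadget A₁₂ is SNNI if and only if L(A₂) ⊆ L(A₁). (This is the reduction of language inclusion to SNNI verification used to prove PSPACE-hardness of the SNNI verification problem.) -/
open Classical

/-- Gadget `A₁₂`: fresh initial state `none`, fresh high letter `none : Option A`;
the letters of `Σ` are embedded via `some`, and the labels of `T1`, `T2`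
are embedded via `Option.map some`. From the fresh initial state there is an
ε-transition to `T1.init` and an `h`-transition to `T2.init`. -/
def gadget {A S1 S2 : Type*} (T1 : LTS A S1) (T2 : LTS A S2) :
    LTS (Option A) (Option (S1 ⊕ S2)) where
  init := none
  trans s l s' :=
    (s = none ∧ l = none ∧ s' = some (Sum.inl T1.init)) ∨
    (s = none ∧ l = some none ∧ s' = some (Sum.inr T2.init)) ∨
    (∃ q q' l0, s = some (Sum.inl q) ∧ s' = some (Sum.inl q') ∧
      l = Option.map some l0 ∧ T1.trans q l0 q') ∨
    (∃ q q' l0, s = some (Sum.inr q) ∧ s' = some (Sum.inr q') ∧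
      l = Option.map some l0 ∧ T2.trans q l0 q')

section Aux

variable {A S1 S2 : Type*} {T1 : LTS A S1} {T2 : LTS A S2}

/-- Any run of `T\E` is also a run of `T/E` with the same trace. -/
private lemma reaches_restrict_hide {A S : Type*} {T : LTS A S} {E : Set A} {s w t}
    (h : (T.restrict E).Reaches s w t) : (T.hide E).Reaches s w t := by
  induction h with
  | refl s => exact .refl s
  | eps h _ ih => exact .eps (Or.inl h.1) ih
  | step h _ ih => exact .step ⟨h.2 _ rfl, h.1⟩ ih

/-- Generic forward simulation of runs along a state map `f` and letter map `g`. -/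
private lemma fwdAux {A S B S' : Type*} {G : LTS A S} {T : LTS B S'} {f : S' → S} {g : B → A}
    (hFwd : ∀ q l0 q', T.trans q l0 q' → G.trans (f q) (Option.map g l0) (f q'))
    {q w t} (h : T.Reaches q w t) : G.Reaches (f q) (w.map g) (f t) := by
  induction h with
  | refl _ => exact .refl _
  | eps ht _ ih => exact .eps (hFwd _ none _ ht) ih
  | step ht _ ih => exact .step (hFwd _ (some _) _ ht) ih

/-- Generic backward simulation of runs along a state map `f` and letter map `g`. -/
private lemma backAux {A S B S' : Type*} {G : LTS A S} {T : LTS B S'} {f : S' → S} {g : B → A}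
    (hInv : ∀ q l s', G.trans (f q) l s' →
      ∃ q' l0, s' = f q' ∧ l = Option.map g l0 ∧ T.trans q l0 q')
    {s w t} (h : G.Reaches s w t) :
    ∀ q, s = f q → ∃ w0 t0, w = w0.map g ∧ t = f t0 ∧ T.Reaches q w0 t0 := by
  induction h with
  | refl s => exact fun q hq => ⟨[], q, rfl, hq, .refl q⟩
  | eps ht _ ih =>
      rintro q rfl
      obtain ⟨q', l0, rfl, hl, ht'⟩ := hInv _ _ _ ht
      cases l0 with
      | none =>
          obtain ⟨w0, t0, hw, hteq, hre⟩ := ih q' rfl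
          exact ⟨w0, t0, hw, hteq, .eps ht' hre⟩
      | some b => simp at hl
  | step ht _ ih =>
      rintro q rfl
      obtain ⟨q', l0, rfl, hl, ht'⟩ := hInv _ _ _ ht
      cases l0 with
      | none => simp at hl
      | some b =>
          obtain ⟨w0, t0, hw, hteq, hre⟩ := ih q' rfl
          obtain rfl : _ = g b := Option.some.inj hl
          exact ⟨b :: w0, t0, by simp [hw], hteq, .step ht' hre⟩

private lemma fwd_restrict_inl (q : S1) (l0 : Option A) (q' : S1) (h : T1.trans q l0 q') :
    ((gadget T1 T2).restrict {none}).trans (some (Sum.inl q)) (Option.map some l0)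
      (some (Sum.inl q')) := by
  refine ⟨Or.inr (Or.inr (Or.inl ⟨q, q', l0, rfl, rfl, rfl, h⟩)), ?_⟩
  intro a ha
  cases l0 with
  | none => exact absurd ha (by simp)
  | some b => obtain rfl : a = some b := (Option.some.inj ha).symm; simp

private lemma fwd_hide_inl (q : S1) (l0 : Option A) (q' : S1) (h : T1.trans q l0 q') :
    ((gadget T1 T2).hide {none}).trans (some (Sum.inl q)) (Option.map some l0)
      (some (Sum.inl q')) := by
  have hg : (gadget T1 T2).trans (some (Sum.inl q)) (Option.map some l0) (some (Sum.inl q')) :=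
    Or.inr (Or.inr (Or.inl ⟨q, q', l0, rfl, rfl, rfl, h⟩))
  cases l0 with
  | none => exact Or.inl hg
  | some b => exact ⟨by simp, hg⟩

private lemma fwd_hide_inr (q : S2) (l0 : Option A) (q' : S2) (h : T2.trans q l0 q') :
    ((gadget T1 T2).hide {none}).trans (some (Sum.inr q)) (Option.map some l0)
      (some (Sum.inr q')) := by
  have hg : (gadget T1 T2).trans (some (Sum.inr q)) (Option.map some l0) (some (Sum.inr q')) :=
    Or.inr (Or.inr (Or.inr ⟨q, q', l0, rfl, rfl, rfl, h⟩))
  cases l0 with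
  | none => exact Or.inl hg
  | some b => exact ⟨by simp, hg⟩

private lemma inv_restrict_inl (q : S1) (l : Option (Option A)) (s' : Option (S1 ⊕ S2))
    (h : ((gadget T1 T2).restrict {none}).trans (some (Sum.inl q)) l s') :
    ∃ q' l0, s' = some (Sum.inl q') ∧ l = Option.map some l0 ∧ T1.trans q l0 q' := by
  obtain ⟨hg, _⟩ := h
  rcases hg with ⟨h1, _⟩ | ⟨h1, _⟩ | ⟨q0, q', l0, hq, hs', hl, ht⟩ | ⟨q0, q', l0, hq, _, _, _⟩
  · cases h1
  · cases h1
  · obtain rfl : q0 = q := by simpa using hq.symm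
    exact ⟨q', l0, hs', hl, ht⟩
  · simp at hq

private lemma inv_hide_inl (q : S1) (l : Option (Option A)) (s' : Option (S1 ⊕ S2))
    (h : ((gadget T1 T2).hide {none}).trans (some (Sum.inl q)) l s') :
    ∃ q' l0, s' = some (Sum.inl q') ∧ l = Option.map some l0 ∧ T1.trans q l0 q' := by
  cases l with
  | none =>
      rcases h with hg | ⟨a, ha, hg⟩
      · rcases hg with ⟨h1, _⟩ | ⟨h1, _⟩ | ⟨q0, q', l0, hq, hs', hl, ht⟩ | ⟨q0, _, _, hq, _⟩
        · cases h1
        · cases h1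
        · obtain rfl : q0 = q := by simpa using hq.symm
          exact ⟨q', l0, hs', hl, ht⟩
        · simp at hq
      · obtain rfl : a = none := ha
        rcases hg with ⟨h1, _⟩ | ⟨h1, _⟩ | ⟨q0, q', l0, hq, hs', hl, ht⟩ | ⟨q0, _, _, hq, _⟩
        · cases h1
        · cases h1
        · cases l0 <;> simp at hl
        · simp at hq
  | some a =>
      obtain ⟨ha, hg⟩ := h
      rcases hg with ⟨h1, _⟩ | ⟨h1, _⟩ | ⟨q0, q', l0, hq, hs', hl, ht⟩ | ⟨q0, _, _, hq, _⟩
      · cases h1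
      · cases h1
      · obtain rfl : q0 = q := by simpa using hq.symm
        exact ⟨q', l0, hs', hl, ht⟩
      · simp at hq

private lemma inv_hide_inr (q : S2) (l : Option (Option A)) (s' : Option (S1 ⊕ S2))
    (h : ((gadget T1 T2).hide {none}).trans (some (Sum.inr q)) l s') :
    ∃ q' l0, s' = some (Sum.inr q') ∧ l = Option.map some l0 ∧ T2.trans q l0 q' := by
  cases l with
  | none =>
      rcases h with hg | ⟨a, ha, hg⟩
      · rcases hg with ⟨h1, _⟩ | ⟨h1, _⟩ | ⟨q0, _, _, hq, _⟩ | ⟨q0, q', l0, hq, hs', hl, ht⟩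
        · cases h1
        · cases h1
        · simp at hq
        · obtain rfl : q0 = q := by simpa using hq.symm
          exact ⟨q', l0, hs', hl, ht⟩
      · obtain rfl : a = none := ha
        rcases hg with ⟨h1, _⟩ | ⟨h1, _⟩ | ⟨q0, _, _, hq, _⟩ | ⟨q0, q', l0, hq, hs', hl, ht⟩
        · cases h1
        · cases h1
        · simp at hq
        · cases l0 <;> simp at hl
  | some a =>
      obtain ⟨ha, hg⟩ := h
      rcases hg with ⟨h1, _⟩ | ⟨h1, _⟩ | ⟨q0, _, _, hq, _⟩ | ⟨q0, q', l0, hq, hs', hl, ht⟩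
      · cases h1
      · cases h1
      · simp at hq
      · obtain rfl : q0 = q := by simpa using hq.symm
        exact ⟨q', l0, hs', hl, ht⟩

/-- Membership in the restricted gadget's language implies membership (up to
embedding) in `L(T1)`. -/
private lemma restrict_lang_char {w} (hw : w ∈ ((gadget T1 T2).restrict {none}).lang) :
    ∃ w0 ∈ T1.lang, w = w0.map some := by
  obtain ⟨t, h⟩ := hw
  cases h with
  | refl _ => exact ⟨[], ⟨_, .refl _⟩, rfl⟩
  | eps ht hr =>
      obtain ⟨hg, _⟩ := ht
      rcases hg with ⟨_, _, rfl⟩ | ⟨_, h1, _⟩ | ⟨q0, _, _, hq, _⟩ | ⟨q0, _, _, hq, _⟩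
      · obtain ⟨w0, t0, rfl, _, hre⟩ :=
          backAux (f := fun q : S1 => some (Sum.inl q)) (g := (some : A → Option A))
            inv_restrict_inl hr T1.init rfl
        exact ⟨w0, ⟨t0, hre⟩, rfl⟩
      · cases h1
      · cases hq
      · cases hq
  | step ht hr =>
      obtain ⟨hg, hcond⟩ := ht
      rcases hg with ⟨_, h1, _⟩ | ⟨_, h1, _⟩ | ⟨q0, _, _, hq, _⟩ | ⟨q0, _, _, hq, _⟩
      · cases h1
      · exact absurd rfl (by obtain rfl := Option.some.inj h1; exact hcond none rfl)
      · cases hq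
      · cases hq

/-- Membership in the hidden gadget's language implies membership (up to
embedding) in `L(T1)` or `L(T2)`. -/
private lemma hide_lang_char {w} (hw : w ∈ ((gadget T1 T2).hide {none}).lang) :
    ∃ w0, (w0 ∈ T1.lang ∨ w0 ∈ T2.lang) ∧ w = w0.map some := by
  obtain ⟨t, h⟩ := hw
  cases h with
  | refl _ => exact ⟨[], Or.inl ⟨_, .refl _⟩, rfl⟩
  | eps ht hr =>
      rcases ht with hg | ⟨a, ha, hg⟩
      · rcases hg with ⟨_, _, rfl⟩ | ⟨_, h1, _⟩ | ⟨q0, _, _, hq, _⟩ | ⟨q0, _, _, hq, _⟩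
        · obtain ⟨w0, t0, rfl, _, hre⟩ :=
            backAux (f := fun q : S1 => some (Sum.inl q)) (g := (some : A → Option A))
              inv_hide_inl hr T1.init rfl
          exact ⟨w0, Or.inl ⟨t0, hre⟩, rfl⟩
        · cases h1
        · cases hq
        · cases hq
      · rcases hg with ⟨_, h1, _⟩ | ⟨_, _, rfl⟩ | ⟨q0, _, _, hq, _⟩ | ⟨q0, _, _, hq, _⟩
        · obtain rfl : a = none := ha
          cases h1
        · obtain ⟨w0, t0, rfl, _, hre⟩ :=
            backAux (f := fun q : S2 => some (Sum.inr q)) (g := (some : A → Option A))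
              inv_hide_inr hr T2.init rfl
          exact ⟨w0, Or.inr ⟨t0, hre⟩, rfl⟩
        · cases hq
        · cases hq
  | step ht hr =>
      obtain ⟨hcond, hg⟩ := ht
      rcases hg with ⟨_, h1, _⟩ | ⟨_, h1, _⟩ | ⟨q0, _, _, hq, _⟩ | ⟨q0, _, _, hq, _⟩
      · cases h1
      · exact absurd (Option.some.inj h1) hcond
      · cases hq
      · cases hq

/-- `L(T1)` embeds into the restricted gadget's language. -/
private lemma mem_restrict_lang {w0} (hw0 : w0 ∈ T1.lang) :
    w0.map some ∈ ((gadget T1 T2).restrict {none}).lang := by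
  obtain ⟨t0, hr⟩ := hw0
  refine ⟨some (Sum.inl t0), LTS.Reaches.eps (s' := some (Sum.inl T1.init)) ?_ ?_⟩
  · exact ⟨Or.inl ⟨rfl, rfl, rfl⟩, fun a ha => by cases ha⟩
  · exact fwdAux fwd_restrict_inl hr

end Aux

theorem stmt13 {A S1 S2 : Type*} (T1 : LTS A S1) (T2 : LTS A S2) :
    (gadget T1 T2).SNNI ({none} : Set (Option A)) ↔ T2.lang ⊆ T1.lang := by
  constructor
  · intro hs w0 hw0
    obtain ⟨t0, hr⟩ := hw0
    have hrun : ((gadget T1 T2).hide {none}).Reaches none (w0.map some) (some (Sum.inr t0)) := by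
      refine .eps (Or.inr ⟨none, rfl, Or.inr (Or.inl ⟨rfl, rfl, rfl⟩)⟩) ?_
      exact fwdAux fwd_hide_inr hr
    have hs' : ((gadget T1 T2).restrict {none}).lang = ((gadget T1 T2).hide {none}).lang := hs
    have hmem : w0.map some ∈ ((gadget T1 T2).restrict {none}).lang := by
      rw [hs']; exact ⟨_, hrun⟩
    obtain ⟨w1, hw1, heq⟩ := restrict_lang_char hmem
    obtain rfl : w0 = w1 := List.map_injective_iff.mpr (Option.some_injective A) heq
    exact hw1
  · intro hsub
    have : ((gadget T1 T2).restrict {none}).lang = ((gadget T1 T2).hide {none}).lang := by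
      apply Set.Subset.antisymm
      · rintro w ⟨t, h⟩
        exact ⟨t, reaches_restrict_hide h⟩
      · intro w hw
        obtain ⟨w0, hw0, rfl⟩ := hide_lang_char hw
        rcases hw0 with hw0 | hw0
        · exact mem_restrict_lang hw0
        · exact mem_restrict_lang (hsub hw0)
    exact this
end

section
/- The gadget A₁₂ is CSNNI if and only if A₁ weakly simulates A₂. (This is the reduction of the simulation pre-order to CSNNI verification used to prove EXPTIME-completeness of the CSNNI verification problem for timed automata.) -/
open Classical

namespace GadgetAux

open LTS

lemma epsReach_mono' {A S : Type*} {T T' : LTS A S}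
    (h : ∀ s s', T.trans s none s' → T'.trans s none s') {q q' : S}
    (hr : T.EpsReach q q') : T'.EpsReach q q' :=
  Relation.ReflTransGen.mono (fun x y => h x y) _ _ hr

lemma simulates_of_sub {A S : Type*} {T T' : LTS A S} (hinit : T'.init = T.init)
    (h : ∀ s l s', T.trans s l s' → T'.trans s l s') : T'.Simulates T := by
  refine ⟨fun s p => s = p, hinit, ?_⟩
  rintro s p rfl
  refine ⟨fun p' hp => ⟨p', epsReach_mono' (fun x y => h x none y) hp, rfl⟩, ?_⟩
  rintro a p' ⟨q1, q2, h1, h2, h3⟩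
  exact ⟨p', ⟨q1, q2, epsReach_mono' (fun x y => h x none y) h1, h _ _ _ h2,
    epsReach_mono' (fun x y => h x none y) h3⟩, rfl⟩

lemma restrict_le_hide {A S : Type*} {T : LTS A S} {E : Set A} :
    ∀ s l s', (T.restrict E).trans s l s' → (T.hide E).trans s l s' := by
  rintro s l s' ⟨h, hl⟩
  cases l with
  | none => exact Or.inl h
  | some a => exact ⟨hl a rfl, h⟩

variable {A S1 S2 : Type*} {T1 : LTS A S1} {T2 : LTS A S2}

/-- characterization of restricted gadget transitions -/
lemma gr_trans_iff {s s' : Option (S1 ⊕ S2)} {l : Option (Option A)} :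
    ((gadget T1 T2).restrict {none}).trans s l s' ↔
      ((s = none ∧ l = none ∧ s' = some (Sum.inl T1.init)) ∨
      (∃ q q' l0, s = some (Sum.inl q) ∧ s' = some (Sum.inl q') ∧
        l = Option.map some l0 ∧ T1.trans q l0 q') ∨
      (∃ q q' l0, s = some (Sum.inr q) ∧ s' = some (Sum.inr q') ∧
        l = Option.map some l0 ∧ T2.trans q l0 q')) := by
  constructor
  · rintro ⟨h, hl⟩
    rcases h with ⟨rfl, rfl, rfl⟩ | ⟨rfl, rfl, rfl⟩ | h | h
    · exact Or.inl ⟨rfl, rfl, rfl⟩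
    · exact absurd rfl (hl none rfl)
    · exact Or.inr (Or.inl h)
    · exact Or.inr (Or.inr h)
  · rintro (⟨rfl, rfl, rfl⟩ | h | h)
    · exact ⟨Or.inl ⟨rfl, rfl, rfl⟩, by simp⟩
    · refine ⟨Or.inr (Or.inr (Or.inl h)), ?_⟩
      obtain ⟨q, q', l0, rfl, rfl, rfl, ht⟩ := h
      rintro a ha
      cases l0 with
      | none => simp at ha
      | some a0 => simp at ha; simp [← ha]
    · refine ⟨Or.inr (Or.inr (Or.inr h)), ?_⟩
      obtain ⟨q, q', l0, rfl, rfl, rfl, ht⟩ := h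
      rintro a ha
      cases l0 with
      | none => simp at ha
      | some a0 => simp at ha; simp [← ha]

/-- characterization of hidden gadget ε-transitions -/
lemma gh_eps_trans_iff {s s' : Option (S1 ⊕ S2)} :
    ((gadget T1 T2).hide {none}).trans s none s' ↔
      ((s = none ∧ (s' = some (Sum.inl T1.init) ∨ s' = some (Sum.inr T2.init))) ∨
      (∃ q q', s = some (Sum.inl q) ∧ s' = some (Sum.inl q') ∧ T1.trans q none q') ∨
      (∃ q q', s = some (Sum.inr q) ∧ s' = some (Sum.inr q') ∧ T2.trans q none q')) := by
  constructor
  · rintro (h | ⟨a, ha, h⟩)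
    · rcases h with ⟨rfl, -, rfl⟩ | ⟨rfl, h, rfl⟩ | ⟨q, q', l0, rfl, rfl, hl, ht⟩ |
        ⟨q, q', l0, rfl, rfl, hl, ht⟩
      · exact Or.inl ⟨rfl, Or.inl rfl⟩
      · simp at h
      · cases l0 with
        | none => exact Or.inr (Or.inl ⟨q, q', rfl, rfl, ht⟩)
        | some a0 => simp at hl
      · cases l0 with
        | none => exact Or.inr (Or.inr ⟨q, q', rfl, rfl, ht⟩)
        | some a0 => simp at hl
    · rcases Set.mem_singleton_iff.mp ha with rfl
      rcases h with ⟨rfl, h, rfl⟩ | ⟨rfl, -, rfl⟩ | ⟨q, q', l0, rfl, rfl, hl, ht⟩ |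
        ⟨q, q', l0, rfl, rfl, hl, ht⟩
      · simp at h
      · exact Or.inl ⟨rfl, Or.inr rfl⟩
      · cases l0 <;> simp at hl
      · cases l0 <;> simp at hl
  · rintro (⟨rfl, rfl | rfl⟩ | ⟨q, q', rfl, rfl, ht⟩ | ⟨q, q', rfl, rfl, ht⟩)
    · exact Or.inl (Or.inl ⟨rfl, rfl, rfl⟩)
    · exact Or.inr ⟨none, rfl, Or.inr (Or.inl ⟨rfl, rfl, rfl⟩)⟩
    · exact Or.inl (Or.inr (Or.inr (Or.inl ⟨q, q', none, rfl, rfl, rfl, ht⟩)))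
    · exact Or.inl (Or.inr (Or.inr (Or.inr ⟨q, q', none, rfl, rfl, rfl, ht⟩)))

/-- characterization of hidden gadget visible transitions -/
lemma gh_vis_trans_iff {s s' : Option (S1 ⊕ S2)} {a : Option A} :
    ((gadget T1 T2).hide {none}).trans s (some a) s' ↔
      ∃ a0, a = some a0 ∧
        ((∃ q q', s = some (Sum.inl q) ∧ s' = some (Sum.inl q') ∧ T1.trans q (some a0) q') ∨
        (∃ q q', s = some (Sum.inr q) ∧ s' = some (Sum.inr q') ∧ T2.trans q (some a0) q')) := by
  constructor
  · rintro ⟨hne, h⟩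
    rcases h with ⟨rfl, h, rfl⟩ | ⟨rfl, h, rfl⟩ | ⟨q, q', l0, rfl, rfl, hl, ht⟩ |
      ⟨q, q', l0, rfl, rfl, hl, ht⟩
    · simp at h
    · simp at h; subst h; exact absurd rfl hne
    · cases l0 with
      | none => simp at hl
      | some a0 =>
        simp only [Option.map_some, Option.some.injEq] at hl
        exact ⟨a0, hl, Or.inl ⟨q, q', rfl, rfl, ht⟩⟩
    · cases l0 with
      | none => simp at hl
      | some a0 =>
        simp only [Option.map_some, Option.some.injEq] at hl
        exact ⟨a0, hl, Or.inr ⟨q, q', rfl, rfl, ht⟩⟩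
  · rintro ⟨a0, rfl, ⟨q, q', rfl, rfl, ht⟩ | ⟨q, q', rfl, rfl, ht⟩⟩
    · exact ⟨by simp, Or.inr (Or.inr (Or.inl ⟨q, q', some a0, rfl, rfl, rfl, ht⟩))⟩
    · exact ⟨by simp, Or.inr (Or.inr (Or.inr ⟨q, q', some a0, rfl, rfl, rfl, ht⟩))⟩

/-- Gr ε-reach inversion starting at an `inl` state. -/
lemma gr_eps_inl {q : S1} {p' : Option (S1 ⊕ S2)}
    (h : ((gadget T1 T2).restrict {none}).EpsReach (some (Sum.inl q)) p') :
    ∃ q', p' = some (Sum.inl q') ∧ T1.EpsReach q q' := by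
  induction h with
  | refl => exact ⟨q, rfl, Relation.ReflTransGen.refl⟩
  | tail hab hbc ih =>
    obtain ⟨qm, rfl, hm⟩ := ih
    rcases gr_trans_iff.mp hbc with ⟨h, -⟩ | ⟨u, u', l0, hu, rfl, hl, ht⟩ |
      ⟨u, u', l0, hu, rfl, hl, ht⟩
    · simp at h
    · cases l0 with
      | none =>
        obtain rfl : qm = u := by simpa using hu
        exact ⟨u', rfl, hm.tail ht⟩
      | some a0 => simp at hl
    · simp at hu

/-- Gr ε-reach inversion starting at the fresh state. -/
lemma gr_eps_none {p' : Option (S1 ⊕ S2)}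
    (h : ((gadget T1 T2).restrict {none}).EpsReach none p') :
    p' = none ∨ ∃ q', p' = some (Sum.inl q') ∧ T1.EpsReach T1.init q' := by
  induction h with
  | refl => exact Or.inl rfl
  | tail hab hbc ih =>
    rcases ih with rfl | ⟨qm, rfl, hm⟩
    · rcases gr_trans_iff.mp hbc with ⟨-, -, rfl⟩ | ⟨u, u', l0, hu, rfl, hl, ht⟩ |
        ⟨u, u', l0, hu, rfl, hl, ht⟩
      · exact Or.inr ⟨T1.init, rfl, Relation.ReflTransGen.refl⟩
      · simp at hu
      · simp at hu
    · rcases gr_trans_iff.mp hbc with ⟨h, -⟩ | ⟨u, u', l0, hu, rfl, hl, ht⟩ |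
        ⟨u, u', l0, hu, rfl, hl, ht⟩
      · simp at h
      · cases l0 with
        | none =>
          obtain rfl : qm = u := by simpa using hu
          exact Or.inr ⟨u', rfl, hm.tail ht⟩
        | some a0 => simp at hl
      · simp at hu

/-- Gh ε-reach inversion starting at an `inl` state. -/
lemma gh_eps_inl {q : S1} {p' : Option (S1 ⊕ S2)}
    (h : ((gadget T1 T2).hide {none}).EpsReach (some (Sum.inl q)) p') :
    ∃ q', p' = some (Sum.inl q') ∧ T1.EpsReach q q' := by
  induction h with
  | refl => exact ⟨q, rfl, Relation.ReflTransGen.refl⟩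
  | tail hab hbc ih =>
    obtain ⟨qm, rfl, hm⟩ := ih
    rcases gh_eps_trans_iff.mp hbc with ⟨h, -⟩ | ⟨u, u', hu, rfl, ht⟩ | ⟨u, u', hu, rfl, ht⟩
    · simp at h
    · obtain rfl : qm = u := by simpa using hu
      exact ⟨u', rfl, hm.tail ht⟩
    · simp at hu

/-- Gh ε-reach inversion starting at an `inr` state. -/
lemma gh_eps_inr {q : S2} {p' : Option (S1 ⊕ S2)}
    (h : ((gadget T1 T2).hide {none}).EpsReach (some (Sum.inr q)) p') :
    ∃ q', p' = some (Sum.inr q') ∧ T2.EpsReach q q' := by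
  induction h with
  | refl => exact ⟨q, rfl, Relation.ReflTransGen.refl⟩
  | tail hab hbc ih =>
    obtain ⟨qm, rfl, hm⟩ := ih
    rcases gh_eps_trans_iff.mp hbc with ⟨h, -⟩ | ⟨u, u', hu, rfl, ht⟩ | ⟨u, u', hu, rfl, ht⟩
    · simp at h
    · simp at hu
    · obtain rfl : qm = u := by simpa using hu
      exact ⟨u', rfl, hm.tail ht⟩

/-- Gh ε-reach inversion starting at the fresh state. -/
lemma gh_eps_none {p' : Option (S1 ⊕ S2)}
    (h : ((gadget T1 T2).hide {none}).EpsReach none p') :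
    p' = none ∨ (∃ q', p' = some (Sum.inl q') ∧ T1.EpsReach T1.init q') ∨
      (∃ q', p' = some (Sum.inr q') ∧ T2.EpsReach T2.init q') := by
  induction h with
  | refl => exact Or.inl rfl
  | tail hab hbc ih =>
    rcases ih with rfl | ⟨qm, rfl, hm⟩ | ⟨qm, rfl, hm⟩
    · rcases gh_eps_trans_iff.mp hbc with ⟨-, rfl | rfl⟩ | ⟨u, u', hu, rfl, ht⟩ |
        ⟨u, u', hu, rfl, ht⟩
      · exact Or.inr (Or.inl ⟨T1.init, rfl, Relation.ReflTransGen.refl⟩)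
      · exact Or.inr (Or.inr ⟨T2.init, rfl, Relation.ReflTransGen.refl⟩)
      · simp at hu
      · simp at hu
    · rcases gh_eps_trans_iff.mp hbc with ⟨h, -⟩ | ⟨u, u', hu, rfl, ht⟩ | ⟨u, u', hu, rfl, ht⟩
      · simp at h
      · obtain rfl : qm = u := by simpa using hu
        exact Or.inr (Or.inl ⟨u', rfl, hm.tail ht⟩)
      · simp at hu
    · rcases gh_eps_trans_iff.mp hbc with ⟨h, -⟩ | ⟨u, u', hu, rfl, ht⟩ | ⟨u, u', hu, rfl, ht⟩
      · simp at h
      · simp at hu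
      · obtain rfl : qm = u := by simpa using hu
        exact Or.inr (Or.inr ⟨u', rfl, hm.tail ht⟩)

/-- ε-reach embeddings -/
lemma gr_eps_embed_inl {q q' : S1} (h : T1.EpsReach q q') :
    ((gadget T1 T2).restrict {none}).EpsReach (some (Sum.inl q)) (some (Sum.inl q')) := by
  induction h with
  | refl => exact Relation.ReflTransGen.refl
  | tail hab hbc ih =>
    exact ih.tail (gr_trans_iff.mpr (Or.inr (Or.inl ⟨_, _, none, rfl, rfl, rfl, hbc⟩)))

lemma gh_eps_embed_inl {q q' : S1} (h : T1.EpsReach q q') :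
    ((gadget T1 T2).hide {none}).EpsReach (some (Sum.inl q)) (some (Sum.inl q')) := by
  induction h with
  | refl => exact Relation.ReflTransGen.refl
  | tail hab hbc ih =>
    exact ih.tail (gh_eps_trans_iff.mpr (Or.inr (Or.inl ⟨_, _, rfl, rfl, hbc⟩)))

lemma gh_eps_embed_inr {q q' : S2} (h : T2.EpsReach q q') :
    ((gadget T1 T2).hide {none}).EpsReach (some (Sum.inr q)) (some (Sum.inr q')) := by
  induction h with
  | refl => exact Relation.ReflTransGen.refl
  | tail hab hbc ih =>
    exact ih.tail (gh_eps_trans_iff.mpr (Or.inr (Or.inr ⟨_, _, rfl, rfl, hbc⟩)))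

lemma gr_eps_none_to_inl {q : S1} (h : T1.EpsReach T1.init q) :
    ((gadget T1 T2).restrict {none}).EpsReach none (some (Sum.inl q)) :=
  Relation.ReflTransGen.head (gr_trans_iff.mpr (Or.inl ⟨rfl, rfl, rfl⟩)) (gr_eps_embed_inl h)

/-- WStep embeddings -/
lemma gr_wstep_embed_inl {a : A} {q q' : S1} (h : T1.WStep a q q') :
    ((gadget T1 T2).restrict {none}).WStep (some a) (some (Sum.inl q)) (some (Sum.inl q')) := by
  obtain ⟨u1, u2, h1, h2, h3⟩ := h
  exact ⟨some (Sum.inl u1), some (Sum.inl u2), gr_eps_embed_inl h1,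
    gr_trans_iff.mpr (Or.inr (Or.inl ⟨_, _, some a, rfl, rfl, rfl, h2⟩)), gr_eps_embed_inl h3⟩

lemma gr_wstep_none_of_inl {a : A} {q' : S1} (h : T1.WStep a T1.init q') :
    ((gadget T1 T2).restrict {none}).WStep (some a) none (some (Sum.inl q')) := by
  obtain ⟨u1, u2, h1, h2, h3⟩ := h
  exact ⟨some (Sum.inl u1), some (Sum.inl u2),
    Relation.ReflTransGen.head (gr_trans_iff.mpr (Or.inl ⟨rfl, rfl, rfl⟩)) (gr_eps_embed_inl h1),
    gr_trans_iff.mpr (Or.inr (Or.inl ⟨_, _, some a, rfl, rfl, rfl, h2⟩)), gr_eps_embed_inl h3⟩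

lemma gh_wstep_embed_inr {a : A} {q q' : S2} (h : T2.WStep a q q') :
    ((gadget T1 T2).hide {none}).WStep (some a) (some (Sum.inr q)) (some (Sum.inr q')) := by
  obtain ⟨u1, u2, h1, h2, h3⟩ := h
  exact ⟨some (Sum.inr u1), some (Sum.inr u2), gh_eps_embed_inr h1,
    gh_vis_trans_iff.mpr ⟨a, rfl, Or.inr ⟨_, _, rfl, rfl, h2⟩⟩, gh_eps_embed_inr h3⟩

lemma wstep_prepend {B S : Type*} {T : LTS B S} {a : B} {q q' q'' : S}
    (h1 : T.EpsReach q q') (h2 : T.WStep a q' q'') : T.WStep a q q'' := by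
  obtain ⟨u1, u2, e1, t, e2⟩ := h2
  exact ⟨u1, u2, h1.trans e1, t, e2⟩

/-- Gr WStep inversion from an `inl` state. -/
lemma gr_wstep_inl {a : Option A} {q : S1} {s'' : Option (S1 ⊕ S2)}
    (h : ((gadget T1 T2).restrict {none}).WStep a (some (Sum.inl q)) s'') :
    ∃ a0 q', a = some a0 ∧ s'' = some (Sum.inl q') ∧ T1.WStep a0 q q' := by
  obtain ⟨p1, p2, e1, t, e2⟩ := h
  obtain ⟨qm, rfl, hm⟩ := gr_eps_inl e1
  rcases gr_trans_iff.mp t with ⟨h, -⟩ | ⟨u, u', l0, hu, rfl, hl, ht⟩ |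
    ⟨u, u', l0, hu, rfl, hl, ht⟩
  · simp at h
  · cases l0 with
    | none => simp at hl
    | some a0 =>
      obtain rfl : qm = u := by simpa using hu
      obtain rfl : a = some a0 := by simpa using hl
      obtain ⟨q', rfl, hq'⟩ := gr_eps_inl e2
      exact ⟨a0, q', rfl, rfl, ⟨_, _, hm, ht, hq'⟩⟩
  · simp at hu

/-- Gr WStep inversion from the fresh state. -/
lemma gr_wstep_none {a : Option A} {s'' : Option (S1 ⊕ S2)}
    (h : ((gadget T1 T2).restrict {none}).WStep a none s'') :
    ∃ a0 q', a = some a0 ∧ s'' = some (Sum.inl q') ∧ T1.WStep a0 T1.init q' := by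
  obtain ⟨p1, p2, e1, t, e2⟩ := h
  rcases gr_eps_none e1 with rfl | ⟨qm, rfl, hm⟩
  · rcases gr_trans_iff.mp t with ⟨-, h, -⟩ | ⟨u, u', l0, hu, rfl, hl, ht⟩ |
      ⟨u, u', l0, hu, rfl, hl, ht⟩
    · simp at h
    · simp at hu
    · simp at hu
  · rcases gr_trans_iff.mp t with ⟨h, -⟩ | ⟨u, u', l0, hu, rfl, hl, ht⟩ |
      ⟨u, u', l0, hu, rfl, hl, ht⟩
    · simp at h
    · cases l0 with
      | none => simp at hl
      | some a0 =>
        obtain rfl : qm = u := by simpa using hu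
        obtain rfl : a = some a0 := by simpa using hl
        obtain ⟨q', rfl, hq'⟩ := gr_eps_inl e2
        exact ⟨a0, q', rfl, rfl, ⟨_, _, hm, ht, hq'⟩⟩
    · simp at hu

/-- Gh WStep inversion from an `inl` state. -/
lemma gh_wstep_inl {a : Option A} {q : S1} {s'' : Option (S1 ⊕ S2)}
    (h : ((gadget T1 T2).hide {none}).WStep a (some (Sum.inl q)) s'') :
    ∃ a0 q', a = some a0 ∧ s'' = some (Sum.inl q') ∧ T1.WStep a0 q q' := by
  obtain ⟨p1, p2, e1, t, e2⟩ := h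
  obtain ⟨qm, rfl, hm⟩ := gh_eps_inl e1
  obtain ⟨a0, rfl, ⟨u, u', hu, rfl, ht⟩ | ⟨u, u', hu, rfl, ht⟩⟩ := gh_vis_trans_iff.mp t
  · obtain rfl : qm = u := by simpa using hu
    obtain ⟨q', rfl, hq'⟩ := gh_eps_inl e2
    exact ⟨a0, q', rfl, rfl, ⟨_, _, hm, ht, hq'⟩⟩
  · simp at hu

/-- Gh WStep inversion from an `inr` state. -/
lemma gh_wstep_inr {a : Option A} {q : S2} {s'' : Option (S1 ⊕ S2)}
    (h : ((gadget T1 T2).hide {none}).WStep a (some (Sum.inr q)) s'') :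
    ∃ a0 q', a = some a0 ∧ s'' = some (Sum.inr q') ∧ T2.WStep a0 q q' := by
  obtain ⟨p1, p2, e1, t, e2⟩ := h
  obtain ⟨qm, rfl, hm⟩ := gh_eps_inr e1
  obtain ⟨a0, rfl, ⟨u, u', hu, rfl, ht⟩ | ⟨u, u', hu, rfl, ht⟩⟩ := gh_vis_trans_iff.mp t
  · simp at hu
  · obtain rfl : qm = u := by simpa using hu
    obtain ⟨q', rfl, hq'⟩ := gh_eps_inr e2
    exact ⟨a0, q', rfl, rfl, ⟨_, _, hm, ht, hq'⟩⟩

/-- Gh WStep inversion from the fresh state. -/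
lemma gh_wstep_none {a : Option A} {s'' : Option (S1 ⊕ S2)}
    (h : ((gadget T1 T2).hide {none}).WStep a none s'') :
    ∃ a0, a = some a0 ∧
      ((∃ q', s'' = some (Sum.inl q') ∧ T1.WStep a0 T1.init q') ∨
       (∃ q', s'' = some (Sum.inr q') ∧ T2.WStep a0 T2.init q')) := by
  obtain ⟨p1, p2, e1, t, e2⟩ := h
  rcases gh_eps_none e1 with rfl | ⟨qm, rfl, hm⟩ | ⟨qm, rfl, hm⟩
  · obtain ⟨a0, rfl, ⟨u, u', hu, rfl, ht⟩ | ⟨u, u', hu, rfl, ht⟩⟩ := gh_vis_trans_iff.mp t <;>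
      simp at hu
  · obtain ⟨a0, rfl, ⟨u, u', hu, rfl, ht⟩ | ⟨u, u', hu, rfl, ht⟩⟩ := gh_vis_trans_iff.mp t
    · obtain rfl : qm = u := by simpa using hu
      obtain ⟨q', rfl, hq'⟩ := gh_eps_inl e2
      exact ⟨a0, rfl, Or.inl ⟨q', rfl, ⟨_, _, hm, ht, hq'⟩⟩⟩
    · simp at hu
  · obtain ⟨a0, rfl, ⟨u, u', hu, rfl, ht⟩ | ⟨u, u', hu, rfl, ht⟩⟩ := gh_vis_trans_iff.mp t
    · simp at hu
    · obtain rfl : qm = u := by simpa using hu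
      obtain ⟨q', rfl, hq'⟩ := gh_eps_inr e2
      exact ⟨a0, rfl, Or.inr ⟨q', rfl, ⟨_, _, hm, ht, hq'⟩⟩⟩

lemma gh_eps_none_to_inr :
    ((gadget T1 T2).hide {none}).EpsReach (none : Option (S1 ⊕ S2)) (some (Sum.inr T2.init)) :=
  Relation.ReflTransGen.single (gh_eps_trans_iff.mpr (Or.inl ⟨rfl, Or.inr rfl⟩))

end GadgetAux

open GadgetAux in
theorem stmt14 {A S1 S2 : Type*} (T1 : LTS A S1) (T2 : LTS A S2) :
    (gadget T1 T2).CSNNI ({none} : Set (Option A)) ↔ T1.Simulates T2 := by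
  constructor
  · rintro ⟨⟨R', hinit', hR'⟩, -⟩
    refine ⟨fun q1 q2 => ∃ s, R' s (some (Sum.inr q2)) ∧
      ((s = none ∧ T1.EpsReach q1 T1.init) ∨
       ∃ u, s = some (Sum.inl u) ∧ T1.EpsReach q1 u), ?_, ?_⟩
    · obtain ⟨s', hre, hs'⟩ := (hR' _ _ hinit').1 _ gh_eps_none_to_inr
      rcases gr_eps_none hre with rfl | ⟨u, rfl, hu⟩
      · exact ⟨none, hs', Or.inl ⟨rfl, Relation.ReflTransGen.refl⟩⟩
      · exact ⟨_, hs', Or.inr ⟨u, rfl, hu⟩⟩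
    · rintro q1 q2 ⟨s, hs, hcase⟩
      constructor
      · intro p' hp
        obtain ⟨s'', hre, hs''⟩ := (hR' _ _ hs).1 _ (gh_eps_embed_inr hp)
        refine ⟨q1, Relation.ReflTransGen.refl, ?_⟩
        rcases hcase with ⟨rfl, hq⟩ | ⟨u, rfl, hu⟩
        · rcases gr_eps_none hre with rfl | ⟨u', rfl, hu'⟩
          · exact ⟨none, hs'', Or.inl ⟨rfl, hq⟩⟩
          · exact ⟨_, hs'', Or.inr ⟨u', rfl, hq.trans hu'⟩⟩
        · obtain ⟨u', rfl, hu'⟩ := gr_eps_inl hre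
          exact ⟨_, hs'', Or.inr ⟨u', rfl, hu.trans hu'⟩⟩
      · intro a p' hp
        obtain ⟨s'', hws, hs''⟩ := (hR' _ _ hs).2 (some a) _ (gh_wstep_embed_inr hp)
        rcases hcase with ⟨rfl, hq⟩ | ⟨u, rfl, hu⟩
        · obtain ⟨a0, u', ha, rfl, hw⟩ := gr_wstep_none hws
          obtain rfl : a0 = a := by simpa using ha.symm
          exact ⟨u', wstep_prepend hq hw, _, hs'', Or.inr ⟨u', rfl, Relation.ReflTransGen.refl⟩⟩
        · obtain ⟨a0, u', ha, rfl, hw⟩ := gr_wstep_inl hws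
          obtain rfl : a0 = a := by simpa using ha.symm
          exact ⟨u', wstep_prepend hu hw, _, hs'', Or.inr ⟨u', rfl, Relation.ReflTransGen.refl⟩⟩
  · rintro ⟨R, hinit, hR⟩
    constructor
    · refine ⟨fun s p => (s = none ∧ p = none) ∨
        (∃ q, s = some (Sum.inl q) ∧ p = some (Sum.inl q)) ∨
        (∃ q1 q2, s = some (Sum.inl q1) ∧ p = some (Sum.inr q2) ∧ R q1 q2),
        Or.inl ⟨rfl, rfl⟩, ?_⟩
      rintro s p (⟨rfl, rfl⟩ | ⟨q, rfl, rfl⟩ | ⟨q1, q2, rfl, rfl, hq⟩)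
      · constructor
        · intro p' hp
          rcases gh_eps_none hp with rfl | ⟨q', rfl, h1⟩ | ⟨q', rfl, h2⟩
          · exact ⟨none, Relation.ReflTransGen.refl, Or.inl ⟨rfl, rfl⟩⟩
          · exact ⟨_, gr_eps_none_to_inl h1, Or.inr (Or.inl ⟨q', rfl, rfl⟩)⟩
          · obtain ⟨u, hu, hru⟩ := (hR _ _ hinit).1 _ h2
            exact ⟨_, gr_eps_none_to_inl hu, Or.inr (Or.inr ⟨u, q', rfl, rfl, hru⟩)⟩
        · intro a p' hp
          obtain ⟨a0, rfl, ⟨q', rfl, hw⟩ | ⟨q', rfl, hw⟩⟩ := gh_wstep_none hp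
          · exact ⟨_, gr_wstep_none_of_inl hw, Or.inr (Or.inl ⟨q', rfl, rfl⟩)⟩
          · obtain ⟨u, hu, hru⟩ := (hR _ _ hinit).2 a0 _ hw
            exact ⟨_, gr_wstep_none_of_inl hu, Or.inr (Or.inr ⟨u, q', rfl, rfl, hru⟩)⟩
      · constructor
        · intro p' hp
          obtain ⟨q', rfl, h1⟩ := gh_eps_inl hp
          exact ⟨_, gr_eps_embed_inl h1, Or.inr (Or.inl ⟨q', rfl, rfl⟩)⟩
        · intro a p' hp
          obtain ⟨a0, q', rfl, rfl, hw⟩ := gh_wstep_inl hp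
          exact ⟨_, gr_wstep_embed_inl hw, Or.inr (Or.inl ⟨q', rfl, rfl⟩)⟩
      · constructor
        · intro p' hp
          obtain ⟨q2', rfl, h2⟩ := gh_eps_inr hp
          obtain ⟨u, hu, hru⟩ := (hR _ _ hq).1 _ h2
          exact ⟨_, gr_eps_embed_inl hu, Or.inr (Or.inr ⟨u, q2', rfl, rfl, hru⟩)⟩
        · intro a p' hp
          obtain ⟨a0, q2', rfl, rfl, hw⟩ := gh_wstep_inr hp
          obtain ⟨u, hu, hru⟩ := (hR _ _ hq).2 a0 _ hw
          exact ⟨_, gr_wstep_embed_inl hu, Or.inr (Or.inr ⟨u, q2', rfl, rfl, hru⟩)⟩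
    · exact simulates_of_sub rfl restrict_le_hide
end

section
/- Assume A₁ and A₂ are ε-free LTSs over the same alphabet Σ. The gadget A₁₂ is BSNNI if and only if A₁ and A₂ are weakly bisimilar. (This is the reduction of bisimilarity to BSNNI verification used to prove EXPTIME-completeness of the BSNNI verification problem for timed automata.) -/
open Classical

section Aux

variable {A S S1 S2 : Type*}

lemma epsFree_epsReach {T : LTS A S} (h : T.EpsFree) {q q' : S}
    (hr : T.EpsReach q q') : q' = q := by
  induction hr with
  | refl => rfl
  | tail _ h' _ => exact absurd h' (h _ _)

lemma epsFree_wstep {T : LTS A S} (h : T.EpsFree) {a : A} {q q' : S} :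
    T.WStep a q q' ↔ T.trans q (some a) q' := by
  constructor
  · rintro ⟨q1, q2, he1, hm, he2⟩
    rw [epsFree_epsReach h he1] at hm
    rw [epsFree_epsReach h he2]
    exact hm
  · intro hm
    exact ⟨q, q', Relation.ReflTransGen.refl, hm, Relation.ReflTransGen.refl⟩

variable (T1 : LTS A S1) (T2 : LTS A S2)


variable {T1 T2}
variable (h1 : T1.EpsFree) (h2 : T2.EpsFree)

include h1 h2

lemma gr_eps {s s' : Option (S1 ⊕ S2)} :
    ((gadget T1 T2).restrict ({none} : Set (Option A))).trans s none s' ↔ s = none ∧ s' = some (Sum.inl T1.init) := by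
  constructor
  · rintro ⟨hg, -⟩
    rcases hg with ⟨hs, -, hs'⟩ | ⟨-, hl, -⟩ | ⟨q, q', l0, -, -, hl, ht⟩ |
        ⟨q, q', l0, -, -, hl, ht⟩
    · exact ⟨hs, hs'⟩
    · exact absurd hl (by simp)
    · cases l0 with
      | none => exact absurd ht (h1 _ _)
      | some a => simp at hl
    · cases l0 with
      | none => exact absurd ht (h2 _ _)
      | some a => simp at hl
  · rintro ⟨hs, hs'⟩
    exact ⟨Or.inl ⟨hs, rfl, hs'⟩, by simp⟩

lemma gh_eps {s s' : Option (S1 ⊕ S2)} :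
    ((gadget T1 T2).hide ({none} : Set (Option A))).trans s none s' ↔
      s = none ∧ (s' = some (Sum.inl T1.init) ∨ s' = some (Sum.inr T2.init)) := by
  constructor
  · rintro (hg | ⟨a, ha, hg⟩)
    · rcases hg with ⟨hs, -, hs'⟩ | ⟨-, hl, -⟩ | ⟨q, q', l0, -, -, hl, ht⟩ |
          ⟨q, q', l0, -, -, hl, ht⟩
      · exact ⟨hs, Or.inl hs'⟩
      · exact absurd hl (by simp)
      · cases l0 with
        | none => exact absurd ht (h1 _ _)
        | some a => simp at hl
      · cases l0 with
        | none => exact absurd ht (h2 _ _)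
        | some a => simp at hl
    · rcases ha with rfl
      rcases hg with ⟨-, hl, -⟩ | ⟨hs, -, hs'⟩ | ⟨q, q', l0, -, -, hl, -⟩ |
          ⟨q, q', l0, -, -, hl, -⟩
      · exact absurd hl (by simp)
      · exact ⟨hs, Or.inr hs'⟩
      · cases l0 <;> simp at hl
      · cases l0 <;> simp at hl
  · rintro ⟨hs, hs' | hs'⟩
    · exact Or.inl (Or.inl ⟨hs, rfl, hs'⟩)
    · exact Or.inr ⟨none, rfl, Or.inr (Or.inl ⟨hs, rfl, hs'⟩)⟩

lemma gr_epsReach {s s' : Option (S1 ⊕ S2)} :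
    ((gadget T1 T2).restrict ({none} : Set (Option A))).EpsReach s s' ↔ s' = s ∨ (s = none ∧ s' = some (Sum.inl T1.init)) := by
  constructor
  · intro hr
    induction hr with
    | refl => exact Or.inl rfl
    | tail _ hstep ih =>
      rcases (gr_eps h1 h2).1 hstep with ⟨rfl, rfl⟩
      rcases ih with rfl | ⟨rfl, h⟩
      · exact Or.inr ⟨rfl, rfl⟩
      · simp at h
  · rintro (rfl | ⟨rfl, rfl⟩)
    · exact Relation.ReflTransGen.refl
    · exact Relation.ReflTransGen.single ((gr_eps h1 h2).2 ⟨rfl, rfl⟩)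

lemma gh_epsReach {s s' : Option (S1 ⊕ S2)} :
    ((gadget T1 T2).hide ({none} : Set (Option A))).EpsReach s s' ↔ s' = s ∨
      (s = none ∧ (s' = some (Sum.inl T1.init) ∨ s' = some (Sum.inr T2.init))) := by
  constructor
  · intro hr
    induction hr with
    | refl => exact Or.inl rfl
    | tail _ hstep ih =>
      rcases (gh_eps h1 h2).1 hstep with ⟨rfl, h'⟩
      rcases ih with rfl | ⟨rfl, h | h⟩
      · exact Or.inr ⟨rfl, h'⟩
      · simp at h
      · simp at h
  · rintro (rfl | ⟨rfl, h⟩)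
    · exact Relation.ReflTransGen.refl
    · exact Relation.ReflTransGen.single ((gh_eps h1 h2).2 ⟨rfl, h⟩)

omit h1 h2

lemma g_step {a : A} {s s' : Option (S1 ⊕ S2)} :
    (gadget T1 T2).trans s (some (some a)) s' ↔
      (∃ q q', s = some (Sum.inl q) ∧ s' = some (Sum.inl q') ∧ T1.trans q (some a) q') ∨
      (∃ q q', s = some (Sum.inr q) ∧ s' = some (Sum.inr q') ∧ T2.trans q (some a) q') := by
  constructor
  · rintro (⟨-, hl, -⟩ | ⟨-, hl, -⟩ | ⟨q, q', l0, hs, hs', hl, ht⟩ |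
        ⟨q, q', l0, hs, hs', hl, ht⟩)
    · simp at hl
    · simp at hl
    · cases l0 with
      | none => simp at hl
      | some b =>
        simp only [Option.map_some, Option.some.injEq] at hl
        subst hl
        exact Or.inl ⟨q, q', hs, hs', ht⟩
    · cases l0 with
      | none => simp at hl
      | some b =>
        simp only [Option.map_some, Option.some.injEq] at hl
        subst hl
        exact Or.inr ⟨q, q', hs, hs', ht⟩
  · rintro (⟨q, q', hs, hs', ht⟩ | ⟨q, q', hs, hs', ht⟩)
    · exact Or.inr (Or.inr (Or.inl ⟨q, q', some a, hs, hs', rfl, ht⟩))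
    · exact Or.inr (Or.inr (Or.inr ⟨q, q', some a, hs, hs', rfl, ht⟩))

lemma gr_step {a : A} {s s' : Option (S1 ⊕ S2)} :
    ((gadget T1 T2).restrict ({none} : Set (Option A))).trans s (some (some a)) s' ↔ (gadget T1 T2).trans s (some (some a)) s' := by
  constructor
  · rintro ⟨hg, -⟩; exact hg
  · intro hg; exact ⟨hg, by simp⟩

lemma gh_step {a : A} {s s' : Option (S1 ⊕ S2)} :
    ((gadget T1 T2).hide ({none} : Set (Option A))).trans s (some (some a)) s' ↔ (gadget T1 T2).trans s (some (some a)) s' := by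
  constructor
  · rintro ⟨-, hg⟩; exact hg
  · intro hg; exact ⟨by simp, hg⟩

lemma gr_no_h {s s' : Option (S1 ⊕ S2)} : ¬ ((gadget T1 T2).restrict ({none} : Set (Option A))).trans s (some none) s' := by
  rintro ⟨-, h⟩
  exact h none rfl rfl

lemma gh_no_h {s s' : Option (S1 ⊕ S2)} : ¬ ((gadget T1 T2).hide ({none} : Set (Option A))).trans s (some none) s' := by
  rintro ⟨h, -⟩
  exact h rfl

lemma gr_no_hW {s s' : Option (S1 ⊕ S2)} : ¬ ((gadget T1 T2).restrict ({none} : Set (Option A))).WStep none s s' := by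
  rintro ⟨q1, q2, -, hm, -⟩
  exact gr_no_h hm

lemma gh_no_hW {s s' : Option (S1 ⊕ S2)} : ¬ ((gadget T1 T2).hide ({none} : Set (Option A))).WStep none s s' := by
  rintro ⟨q1, q2, -, hm, -⟩
  exact gh_no_h hm

include h1 h2

lemma grW_dec {a : A} {s s' : Option (S1 ⊕ S2)} (hw : ((gadget T1 T2).restrict ({none} : Set (Option A))).WStep (some a) s s') :
    (∃ q q', (s = some (Sum.inl q) ∨ (s = none ∧ q = T1.init)) ∧
      s' = some (Sum.inl q') ∧ T1.trans q (some a) q') ∨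
    (∃ q q', s = some (Sum.inr q) ∧ s' = some (Sum.inr q') ∧ T2.trans q (some a) q') := by
  obtain ⟨q1, q2, he1, hm, he2⟩ := hw
  rw [gr_step] at hm
  have he1' := (gr_epsReach h1 h2).1 he1
  have he2' := (gr_epsReach h1 h2).1 he2
  rcases (g_step).1 hm with ⟨q, q', hq1, hq2, ht⟩ | ⟨q, q', hq1, hq2, ht⟩
  · subst hq1 hq2
    rcases he2' with rfl | ⟨h, -⟩
    · rcases he1' with rfl | ⟨rfl, h'⟩
      · exact Or.inl ⟨q, q', Or.inl rfl, rfl, ht⟩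
      · obtain rfl : q = T1.init := by injection h' with h'; injection h'
        exact Or.inl ⟨_, q', Or.inr ⟨rfl, rfl⟩, rfl, ht⟩
    · simp at h
  · subst hq1 hq2
    rcases he2' with rfl | ⟨h, -⟩
    · rcases he1' with rfl | ⟨rfl, h'⟩
      · exact Or.inr ⟨q, q', rfl, rfl, ht⟩
      · simp at h'
    · simp at h

lemma ghW_dec {a : A} {s s' : Option (S1 ⊕ S2)} (hw : ((gadget T1 T2).hide ({none} : Set (Option A))).WStep (some a) s s') :
    (∃ q q', (s = some (Sum.inl q) ∨ (s = none ∧ q = T1.init)) ∧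
      s' = some (Sum.inl q') ∧ T1.trans q (some a) q') ∨
    (∃ q q', (s = some (Sum.inr q) ∨ (s = none ∧ q = T2.init)) ∧
      s' = some (Sum.inr q') ∧ T2.trans q (some a) q') := by
  obtain ⟨q1, q2, he1, hm, he2⟩ := hw
  rw [gh_step] at hm
  have he1' := (gh_epsReach h1 h2).1 he1
  have he2' := (gh_epsReach h1 h2).1 he2
  rcases (g_step).1 hm with ⟨q, q', hq1, hq2, ht⟩ | ⟨q, q', hq1, hq2, ht⟩
  · subst hq1 hq2
    rcases he2' with rfl | ⟨h, -⟩
    · rcases he1' with rfl | ⟨rfl, h' | h'⟩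
      · exact Or.inl ⟨q, q', Or.inl rfl, rfl, ht⟩
      · obtain rfl : q = T1.init := by injection h' with h'; injection h'
        exact Or.inl ⟨_, q', Or.inr ⟨rfl, rfl⟩, rfl, ht⟩
      · simp at h'
    · simp at h
  · subst hq1 hq2
    rcases he2' with rfl | ⟨h, -⟩
    · rcases he1' with rfl | ⟨rfl, h' | h'⟩
      · exact Or.inr ⟨q, q', Or.inl rfl, rfl, ht⟩
      · simp at h'
      · obtain rfl : q = T2.init := by injection h' with h'; injection h'
        exact Or.inr ⟨_, q', Or.inr ⟨rfl, rfl⟩, rfl, ht⟩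
    · simp at h

omit h1 h2

lemma grW_inl {a : A} {q q' : S1} (ht : T1.trans q (some a) q') :
    ((gadget T1 T2).restrict ({none} : Set (Option A))).WStep (some a) (some (Sum.inl q)) (some (Sum.inl q')) :=
  ⟨_, _, Relation.ReflTransGen.refl, (gr_step).2 ((g_step).2 (Or.inl ⟨q, q', rfl, rfl, ht⟩)),
    Relation.ReflTransGen.refl⟩

lemma ghW_inl {a : A} {q q' : S1} (ht : T1.trans q (some a) q') :
    ((gadget T1 T2).hide ({none} : Set (Option A))).WStep (some a) (some (Sum.inl q)) (some (Sum.inl q')) :=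
  ⟨_, _, Relation.ReflTransGen.refl, (gh_step).2 ((g_step).2 (Or.inl ⟨q, q', rfl, rfl, ht⟩)),
    Relation.ReflTransGen.refl⟩

lemma ghW_inr {a : A} {q q' : S2} (ht : T2.trans q (some a) q') :
    ((gadget T1 T2).hide ({none} : Set (Option A))).WStep (some a) (some (Sum.inr q)) (some (Sum.inr q')) :=
  ⟨_, _, Relation.ReflTransGen.refl, (gh_step).2 ((g_step).2 (Or.inr ⟨q, q', rfl, rfl, ht⟩)),
    Relation.ReflTransGen.refl⟩

include h1 h2

lemma grW_none {a : A} {q' : S1} (ht : T1.trans T1.init (some a) q') :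
    ((gadget T1 T2).restrict ({none} : Set (Option A))).WStep (some a) none (some (Sum.inl q')) :=
  ⟨_, _, (gr_epsReach h1 h2).2 (Or.inr ⟨rfl, rfl⟩),
    (gr_step).2 ((g_step).2 (Or.inl ⟨_, q', rfl, rfl, ht⟩)), Relation.ReflTransGen.refl⟩

lemma ghW_none_inl {a : A} {q' : S1} (ht : T1.trans T1.init (some a) q') :
    ((gadget T1 T2).hide ({none} : Set (Option A))).WStep (some a) none (some (Sum.inl q')) :=
  ⟨_, _, (gh_epsReach h1 h2).2 (Or.inr ⟨rfl, Or.inl rfl⟩),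
    (gh_step).2 ((g_step).2 (Or.inl ⟨_, q', rfl, rfl, ht⟩)), Relation.ReflTransGen.refl⟩

lemma ghW_none_inr {a : A} {q' : S2} (ht : T2.trans T2.init (some a) q') :
    ((gadget T1 T2).hide ({none} : Set (Option A))).WStep (some a) none (some (Sum.inr q')) :=
  ⟨_, _, (gh_epsReach h1 h2).2 (Or.inr ⟨rfl, Or.inr rfl⟩),
    (gh_step).2 ((g_step).2 (Or.inr ⟨_, q', rfl, rfl, ht⟩)), Relation.ReflTransGen.refl⟩

end Aux


theorem stmt15 {A S1 S2 : Type*} (T1 : LTS A S1) (T2 : LTS A S2)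
    (h1 : T1.EpsFree) (h2 : T2.EpsFree) :
    (gadget T1 T2).BSNNI ({none} : Set (Option A)) ↔ T1.Bisimilar T2 := by
  constructor
  · rintro ⟨R', hs1, hs2⟩
    have hinit : (fun q p => R' (some (Sum.inl q)) (some (Sum.inr p)) ∨
        (q = T1.init ∧ R' none (some (Sum.inr p)))) T1.init T2.init := by
      obtain ⟨s', hes, hR⟩ := (hs1.2 _ _ hs1.1).1 (some (Sum.inr T2.init))
        ((gh_epsReach h1 h2).2 (Or.inr ⟨rfl, Or.inr rfl⟩))
      rcases (gr_epsReach h1 h2).1 hes with rfl | ⟨-, rfl⟩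
      · exact Or.inr ⟨rfl, hR⟩
      · exact Or.inl hR
    refine ⟨fun q p => R' (some (Sum.inl q)) (some (Sum.inr p)) ∨
      (q = T1.init ∧ R' none (some (Sum.inr p))), ⟨hinit, ?_⟩, ⟨hinit, ?_⟩⟩
    · intro q p hR
      constructor
      · intro p' hp'
        obtain rfl := epsFree_epsReach h2 hp'
        exact ⟨q, Relation.ReflTransGen.refl, hR⟩
      · intro a p' hw
        have ht := (epsFree_wstep h2).1 hw
        rcases hR with hR | ⟨rfl, hR⟩
        · obtain ⟨s', hws, hR'⟩ :=
            (hs1.2 _ _ hR).2 (some a) (some (Sum.inr p')) (ghW_inr ht)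
          rcases grW_dec h1 h2 hws with ⟨q0, q0', hq0, rfl, ht1⟩ | ⟨q0, q0', hq0, -, -⟩
          · rcases hq0 with h' | ⟨h', -⟩
            · obtain rfl : q = q0 := by injection h' with h'; injection h'
              exact ⟨q0', (epsFree_wstep h1).2 ht1, Or.inl hR'⟩
            · simp at h'
          · simp at hq0
        · obtain ⟨s', hws, hR'⟩ :=
            (hs1.2 _ _ hR).2 (some a) (some (Sum.inr p')) (ghW_inr ht)
          rcases grW_dec h1 h2 hws with ⟨q0, q0', hq0, rfl, ht1⟩ | ⟨q0, q0', hq0, -, -⟩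
          · rcases hq0 with h' | ⟨-, rfl⟩
            · simp at h'
            · exact ⟨q0', (epsFree_wstep h1).2 ht1, Or.inl hR'⟩
          · simp at hq0
    · intro p q hR
      constructor
      · intro q' hq'
        obtain rfl := epsFree_epsReach h1 hq'
        exact ⟨p, Relation.ReflTransGen.refl, hR⟩
      · intro a q' hw
        have ht := (epsFree_wstep h1).1 hw
        rcases hR with hR | ⟨rfl, hR⟩
        · obtain ⟨p'', hwp, hR'⟩ :=
            (hs2.2 _ _ hR).2 (some a) (some (Sum.inl q')) (grW_inl ht)
          rcases ghW_dec h1 h2 hwp with ⟨q0, q0', hq0, -, -⟩ | ⟨p0, p0', hp0, rfl, ht2⟩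
          · rcases hq0 with h' | ⟨h', -⟩ <;> simp at h'
          · rcases hp0 with h' | ⟨h', -⟩
            · obtain rfl : p = p0 := by injection h' with h'; injection h'
              exact ⟨p0', (epsFree_wstep h2).2 ht2, Or.inl hR'⟩
            · simp at h'
        · obtain ⟨p'', hwp, hR'⟩ :=
            (hs2.2 _ _ hR).2 (some a) (some (Sum.inl q')) (grW_none h1 h2 ht)
          rcases ghW_dec h1 h2 hwp with ⟨q0, q0', hq0, -, -⟩ | ⟨p0, p0', hp0, rfl, ht2⟩
          · rcases hq0 with h' | ⟨h', -⟩ <;> simp at h'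
          · rcases hp0 with h' | ⟨h', -⟩
            · obtain rfl : p = p0 := by injection h' with h'; injection h'
              exact ⟨p0', (epsFree_wstep h2).2 ht2, Or.inl hR'⟩
            · simp at h'
  · rintro ⟨R, hA, hB⟩
    refine ⟨fun s p =>
      (s = none ∧ p = none) ∨
      (∃ q, s = some (Sum.inl q) ∧ p = some (Sum.inl q)) ∨
      (∃ q p0, s = some (Sum.inl q) ∧ p = some (Sum.inr p0) ∧ R q p0),
      ⟨Or.inl ⟨rfl, rfl⟩, ?_⟩, ⟨Or.inl ⟨rfl, rfl⟩, ?_⟩⟩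
    · intro s p hR
      constructor
      · intro p' hp'
        rcases (gh_epsReach h1 h2).1 hp' with rfl | ⟨rfl, rfl | rfl⟩
        · exact ⟨s, Relation.ReflTransGen.refl, hR⟩
        · obtain rfl : s = none := by
            rcases hR with ⟨rfl, -⟩ | ⟨q, -, h⟩ | ⟨q, p0, -, h, -⟩ <;> first | rfl | simp at h
          exact ⟨some (Sum.inl T1.init), (gr_epsReach h1 h2).2 (Or.inr ⟨rfl, rfl⟩),
            Or.inr (Or.inl ⟨T1.init, rfl, rfl⟩)⟩
        · obtain rfl : s = none := by
            rcases hR with ⟨rfl, -⟩ | ⟨q, -, h⟩ | ⟨q, p0, -, h, -⟩ <;> first | rfl | simp at h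
          exact ⟨some (Sum.inl T1.init), (gr_epsReach h1 h2).2 (Or.inr ⟨rfl, rfl⟩),
            Or.inr (Or.inr ⟨T1.init, T2.init, rfl, rfl, hA.1⟩)⟩
      · intro a p' hw
        cases a with
        | none => exact absurd hw gh_no_hW
        | some a0 =>
          rcases ghW_dec h1 h2 hw with ⟨q0, q0', hq0, rfl, ht⟩ | ⟨p0, p0', hp0, rfl, ht⟩
          · rcases hq0 with rfl | ⟨rfl, rfl⟩
            · rcases hR with ⟨-, h⟩ | ⟨q, rfl, h⟩ | ⟨q, p1, -, h, -⟩
              · simp at h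
              · obtain rfl : q0 = q := by injection h with h; injection h
                exact ⟨some (Sum.inl q0'), grW_inl ht, Or.inr (Or.inl ⟨q0', rfl, rfl⟩)⟩
              · simp at h
            · obtain rfl : s = none := by
                rcases hR with ⟨rfl, -⟩ | ⟨q, -, h⟩ | ⟨q, p1, -, h, -⟩ <;>
                  first | rfl | simp at h
              exact ⟨some (Sum.inl q0'), grW_none h1 h2 ht,
                Or.inr (Or.inl ⟨q0', rfl, rfl⟩)⟩
          · rcases hp0 with rfl | ⟨rfl, rfl⟩
            · rcases hR with ⟨-, h⟩ | ⟨q, -, h⟩ | ⟨q, p1, rfl, h, hRq⟩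
              · simp at h
              · simp at h
              · obtain rfl : p0 = p1 := by injection h with h; injection h
                obtain ⟨q', hwq, hR2⟩ :=
                  (hA.2 q _ hRq).2 a0 p0' ((epsFree_wstep h2).2 ht)
                exact ⟨some (Sum.inl q'), grW_inl ((epsFree_wstep h1).1 hwq),
                  Or.inr (Or.inr ⟨q', p0', rfl, rfl, hR2⟩)⟩
            · obtain rfl : s = none := by
                rcases hR with ⟨rfl, -⟩ | ⟨q, -, h⟩ | ⟨q, p1, -, h, -⟩ <;>
                  first | rfl | simp at h
              obtain ⟨q', hwq, hR2⟩ :=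
                (hA.2 T1.init T2.init hA.1).2 a0 p0' ((epsFree_wstep h2).2 ht)
              exact ⟨some (Sum.inl q'), grW_none h1 h2 ((epsFree_wstep h1).1 hwq),
                Or.inr (Or.inr ⟨q', p0', rfl, rfl, hR2⟩)⟩
    · intro p s hR
      constructor
      · intro s' hs'
        rcases (gr_epsReach h1 h2).1 hs' with rfl | ⟨rfl, rfl⟩
        · exact ⟨p, Relation.ReflTransGen.refl, hR⟩
        · obtain rfl : p = none := by
            rcases hR with ⟨-, rfl⟩ | ⟨q, h, -⟩ | ⟨q, p0, h, -, -⟩ <;>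
              first | rfl | simp at h
          exact ⟨some (Sum.inl T1.init), (gh_epsReach h1 h2).2 (Or.inr ⟨rfl, Or.inl rfl⟩),
            Or.inr (Or.inl ⟨T1.init, rfl, rfl⟩)⟩
      · intro a s' hw
        cases a with
        | none => exact absurd hw gr_no_hW
        | some a0 =>
          rcases grW_dec h1 h2 hw with ⟨q0, q0', hq0, rfl, ht⟩ | ⟨q0, q0', hq0, -, -⟩
          · rcases hq0 with rfl | ⟨rfl, rfl⟩
            · rcases hR with ⟨h, -⟩ | ⟨q, h, rfl⟩ | ⟨q, p0, h, rfl, hRq⟩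
              · simp at h
              · obtain rfl : q0 = q := by injection h with h; injection h
                exact ⟨some (Sum.inl q0'), ghW_inl ht, Or.inr (Or.inl ⟨q0', rfl, rfl⟩)⟩
              · obtain rfl : q0 = q := by injection h with h; injection h
                obtain ⟨p0', hwp, hR2⟩ :=
                  (hB.2 p0 q0 hRq).2 a0 q0' ((epsFree_wstep h1).2 ht)
                exact ⟨some (Sum.inr p0'), ghW_inr ((epsFree_wstep h2).1 hwp),
                  Or.inr (Or.inr ⟨q0', p0', rfl, rfl, hR2⟩)⟩
            · obtain rfl : p = none := by
                rcases hR with ⟨-, rfl⟩ | ⟨q, h, -⟩ | ⟨q, p0, h, -, -⟩ <;>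
                  first | rfl | simp at h
              exact ⟨some (Sum.inl q0'), ghW_none_inl h1 h2 ht,
                Or.inr (Or.inl ⟨q0', rfl, rfl⟩)⟩
          · exfalso
            rcases hR with ⟨rfl, -⟩ | ⟨q, rfl, -⟩ | ⟨q, p0, rfl, -, -⟩ <;> simp at hq0
end

section
/- There exists a finite ε-free LTS over an alphabet partitioned as Σl = {ℓ₁, ℓ₂, ℓ₃}, Σh = {h} that is SNNI but not CSNNI. (A witness is the nine-state automaton with transitions q₀ →ℓ₁ q₁, q₀ →ℓ₁ q₂, q₁ →ℓ₂ q₃, q₂ →ℓ₃ q₄, q₀ →h q₅, q₅ →ℓ₁ q₆, q₆ →ℓ₂ q₇, q₆ →ℓ₃ q₈.) -/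
open Classical

/-- Edges of the witness automaton. -/
def Wedges : List (Fin 9 × Option (Fin 4) × Fin 9) :=
  [(0, some 0, 1), (0, some 0, 2), (1, some 1, 3), (2, some 2, 4),
   (0, some 3, 5), (5, some 0, 6), (6, some 1, 7), (6, some 2, 8)]

/-- The witness LTS. -/
def WT : LTS (Fin 4) (Fin 9) := ⟨0, fun s l s' => (s, l, s') ∈ Wedges⟩

/-- Allowed traces from each state (for both `WT.restrict {3}` and `WT.hide {3}`). -/
def Wtr (s : Fin 9) (w : List (Fin 4)) : Prop :=
  if s.val = 0 ∨ s.val = 5 then w = [] ∨ w = [0] ∨ w = [0, 1] ∨ w = [0, 2]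
  else if s.val = 1 then w = [] ∨ w = [1]
  else if s.val = 2 then w = [] ∨ w = [2]
  else if s.val = 6 then w = [] ∨ w = [1] ∨ w = [2]
  else w = []

@[simp] lemma finv0 : ((0 : Fin 9)).val = 0 := rfl
@[simp] lemma finv1 : ((1 : Fin 9)).val = 1 := rfl
@[simp] lemma finv2 : ((2 : Fin 9)).val = 2 := rfl
@[simp] lemma finv3 : ((3 : Fin 9)).val = 3 := rfl
@[simp] lemma finv4 : ((4 : Fin 9)).val = 4 := rfl
@[simp] lemma finv5 : ((5 : Fin 9)).val = 5 := rfl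
@[simp] lemma finv6 : ((6 : Fin 9)).val = 6 := rfl
@[simp] lemma finv7 : ((7 : Fin 9)).val = 7 := rfl
@[simp] lemma finv8 : ((8 : Fin 9)).val = 8 := rfl

lemma Wtr_nil : ∀ s : Fin 9, Wtr s [] := by
  intro s
  unfold Wtr
  split_ifs <;> simp

lemma WT_epsFree : WT.EpsFree := by
  intro s s' h
  simp [WT, Wedges] at h

lemma restrict_reach : ∀ {s w t}, (WT.restrict {3}).Reaches s w t → Wtr s w := by
  intro s w t h
  induction h with
  | refl s => exact Wtr_nil s
  | eps h _ _ => exact absurd h.1 (WT_epsFree _ _)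
  | @step s s' a w t h _ ih =>
    obtain ⟨h1, h2⟩ := h
    have h3 : (3 : Fin 4) ∉ ({3} : Set (Fin 4)) → False := by simp
    simp only [WT, Wedges, List.mem_cons, List.mem_singleton, Prod.mk.injEq,
      Option.some.injEq, List.not_mem_nil, or_false] at h1
    rcases h1 with ⟨rfl, rfl, rfl⟩ | ⟨rfl, rfl, rfl⟩ | ⟨rfl, rfl, rfl⟩ | ⟨rfl, rfl, rfl⟩ |
      ⟨rfl, rfl, rfl⟩ | ⟨rfl, rfl, rfl⟩ | ⟨rfl, rfl, rfl⟩ | ⟨rfl, rfl, rfl⟩ <;>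
      first
      | exact ((h2 3 rfl) rfl).elim
      | (norm_num [Wtr] at ih ⊢; rcases ih with rfl | rfl | rfl | rfl <;> simp)
      | (norm_num [Wtr] at ih ⊢; rcases ih with rfl | rfl | rfl <;> simp)
      | (norm_num [Wtr] at ih ⊢; rcases ih with rfl | rfl <;> simp)
      | (norm_num [Wtr] at ih ⊢; rcases ih with rfl <;> simp)

lemma hide_reach : ∀ {s w t}, (WT.hide {3}).Reaches s w t → Wtr s w := by
  intro s w t h
  induction h with
  | refl s => exact Wtr_nil s
  | @eps s s' w t h _ ih =>
    rcases h with h | ⟨a, ha, h⟩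
    · exact absurd h (WT_epsFree _ _)
    · rw [Set.mem_singleton_iff] at ha
      subst ha
      simp only [WT, Wedges, List.mem_cons, List.mem_singleton, Prod.mk.injEq,
        Option.some.injEq, List.not_mem_nil, or_false] at h
      rcases h with ⟨rfl, h3, rfl⟩ | ⟨rfl, h3, rfl⟩ | ⟨rfl, h3, rfl⟩ | ⟨rfl, h3, rfl⟩ |
        ⟨rfl, -, rfl⟩ | ⟨rfl, h3, rfl⟩ | ⟨rfl, h3, rfl⟩ | ⟨rfl, h3, rfl⟩ <;>
        first
        | exact absurd h3 (by decide)
        | norm_num [Wtr] at ih ⊢ <;> exact ih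
  | @step s s' a w t h _ ih =>
    obtain ⟨h2, h1⟩ := h
    have h3 : (3 : Fin 4) ∈ ({3} : Set (Fin 4)) := rfl
    simp only [WT, Wedges, List.mem_cons, List.mem_singleton, Prod.mk.injEq,
      Option.some.injEq, List.not_mem_nil, or_false] at h1
    rcases h1 with ⟨rfl, rfl, rfl⟩ | ⟨rfl, rfl, rfl⟩ | ⟨rfl, rfl, rfl⟩ | ⟨rfl, rfl, rfl⟩ |
      ⟨rfl, rfl, rfl⟩ | ⟨rfl, rfl, rfl⟩ | ⟨rfl, rfl, rfl⟩ | ⟨rfl, rfl, rfl⟩ <;>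
      first
      | exact (h2 h3).elim
      | (norm_num [Wtr] at ih ⊢; rcases ih with rfl | rfl | rfl | rfl <;> simp)
      | (norm_num [Wtr] at ih ⊢; rcases ih with rfl | rfl | rfl <;> simp)
      | (norm_num [Wtr] at ih ⊢; rcases ih with rfl | rfl <;> simp)
      | (norm_num [Wtr] at ih ⊢; rcases ih with rfl <;> simp)

lemma restrict_trans_of (s : Fin 9) (a : Fin 4) (s' : Fin 9)
    (hmem : ((s, some a, s') : Fin 9 × Option (Fin 4) × Fin 9) ∈ Wedges)
    (ha : a ≠ 3) : (WT.restrict {3}).trans s (some a) s' := by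
  refine ⟨hmem, ?_⟩
  rintro b hb
  simp only [Option.some.injEq] at hb
  subst hb
  simpa using ha

lemma hide_trans_of (s : Fin 9) (a : Fin 4) (s' : Fin 9)
    (hmem : ((s, some a, s') : Fin 9 × Option (Fin 4) × Fin 9) ∈ Wedges)
    (ha : a ≠ 3) : (WT.hide {3}).trans s (some a) s' := by
  exact ⟨by simpa using ha, hmem⟩

lemma restrict_lang : (WT.restrict {3}).lang = {w | Wtr 0 w} := by
  ext w
  constructor
  · rintro ⟨t, h⟩
    exact restrict_reach h
  · intro hw
    have e1 := restrict_trans_of 0 0 1 (by simp [Wedges]) (by decide)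
    have e2 := restrict_trans_of 1 1 3 (by simp [Wedges]) (by decide)
    have e3 := restrict_trans_of 0 0 2 (by simp [Wedges]) (by decide)
    have e4 := restrict_trans_of 2 2 4 (by simp [Wedges]) (by decide)
    rcases hw with rfl | rfl | rfl | rfl
    · exact ⟨0, LTS.Reaches.refl _⟩
    · exact ⟨1, LTS.Reaches.step e1 (LTS.Reaches.refl _)⟩
    · exact ⟨3, LTS.Reaches.step e1 (LTS.Reaches.step e2 (LTS.Reaches.refl _))⟩
    · exact ⟨4, LTS.Reaches.step e3 (LTS.Reaches.step e4 (LTS.Reaches.refl _))⟩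

lemma hide_lang : (WT.hide {3}).lang = {w | Wtr 0 w} := by
  ext w
  constructor
  · rintro ⟨t, h⟩
    exact hide_reach h
  · intro hw
    have e1 := hide_trans_of 0 0 1 (by simp [Wedges]) (by decide)
    have e2 := hide_trans_of 1 1 3 (by simp [Wedges]) (by decide)
    have e3 := hide_trans_of 0 0 2 (by simp [Wedges]) (by decide)
    have e4 := hide_trans_of 2 2 4 (by simp [Wedges]) (by decide)
    rcases hw with rfl | rfl | rfl | rfl
    · exact ⟨0, LTS.Reaches.refl _⟩
    · exact ⟨1, LTS.Reaches.step e1 (LTS.Reaches.refl _)⟩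
    · exact ⟨3, LTS.Reaches.step e1 (LTS.Reaches.step e2 (LTS.Reaches.refl _))⟩
    · exact ⟨4, LTS.Reaches.step e3 (LTS.Reaches.step e4 (LTS.Reaches.refl _))⟩

lemma restrict_epsFree : ∀ s s', ¬ (WT.restrict {3}).trans s none s' := by
  intro s s' h
  exact WT_epsFree s s' h.1

lemma restrict_epsReach {q q' : Fin 9} (h : (WT.restrict {3}).EpsReach q q') : q' = q := by
  induction h with
  | refl => rfl
  | tail _ hstep _ => exact absurd hstep (restrict_epsFree _ _)

/-- Interpretation: alphabet `Fin 4` with `ℓ₁ = 0`, `ℓ₂ = 1`, `ℓ₃ = 2`, `h = 3`,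
so `Σl = {0, 1, 2}` and `Σh = {3}`; states `Fin 9` are `q₀, …, q₈`. -/
theorem stmt16 :
    ∃ T : LTS (Fin 4) (Fin 9), T.EpsFree ∧
      T.SNNI ({3} : Set (Fin 4)) ∧ ¬ T.CSNNI ({3} : Set (Fin 4)) := by
  refine ⟨WT, WT_epsFree, by rw [LTS.SNNI, restrict_lang, hide_lang], ?_⟩
  rintro ⟨⟨R, hR0, hR⟩, -⟩
  -- the restriction cannot weakly simulate the hiding
  -- first: in the hiding, 0 ⇒ε 5
  have heps : (WT.hide {3}).EpsReach 0 5 := by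
    refine Relation.ReflTransGen.single (Or.inr ⟨3, rfl, ?_⟩)
    simp [WT, Wedges]
  have hinit : (WT.hide {3}).init = (0 : Fin 9) := rfl
  have hinit' : (WT.restrict {3}).init = (0 : Fin 9) := rfl
  obtain ⟨s1, hre1, hRs1⟩ := (hR _ _ hR0).1 5 heps
  have hs1 : s1 = (0 : Fin 9) := restrict_epsReach hre1
  subst hs1
  -- in the hiding, 5 ⇒0 6
  have hw06 : (WT.hide {3}).WStep 0 5 6 :=
    ⟨5, 6, Relation.ReflTransGen.refl,
      hide_trans_of 5 0 6 (by simp [Wedges]) (by decide), Relation.ReflTransGen.refl⟩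
  obtain ⟨s2, hws2, hRs2⟩ := (hR _ _ hRs1).2 0 6 hw06
  obtain ⟨q1, q2, he1, htr, he2⟩ := hws2
  have hq1 : q1 = (0 : Fin 9) := restrict_epsReach he1
  have hq2 : s2 = q2 := restrict_epsReach he2
  subst hq1; subst hq2
  have hq2v : s2 = 1 ∨ s2 = 2 := by simpa [WT, Wedges] using htr.1
  rcases hq2v with rfl | rfl
  · -- R 1 6, but 6 ⇒2 8 in hiding and 1 has no 2-step in restriction
    have hw : (WT.hide {3}).WStep 2 6 8 :=
      ⟨6, 8, Relation.ReflTransGen.refl,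
        hide_trans_of 6 2 8 (by simp [Wedges]) (by decide), Relation.ReflTransGen.refl⟩
    obtain ⟨s3, hws3, -⟩ := (hR _ _ hRs2).2 2 8 hw
    obtain ⟨r1, r2, hre1', htr', -⟩ := hws3
    have hr1 : r1 = 1 := restrict_epsReach hre1'
    subst hr1
    have := htr'.1
    simp [WT, Wedges] at this
  · -- R 2 6, but 6 ⇒1 7 in hiding and 2 has no 1-step in restriction
    have hw : (WT.hide {3}).WStep 1 6 7 :=
      ⟨6, 7, Relation.ReflTransGen.refl,
        hide_trans_of 6 1 7 (by simp [Wedges]) (by decide), Relation.ReflTransGen.refl⟩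
    obtain ⟨s3, hws3, -⟩ := (hR _ _ hRs2).2 1 7 hw
    obtain ⟨r1, r2, hre1', htr', -⟩ := hws3
    have hr1 : r1 = 2 := restrict_epsReach hre1'
    subst hr1
    have := htr'.1
    simp [WT, Wedges] at this
end

section
/- There exists a finite deterministic LTS over an alphabet partitioned as Σl = {ℓ}, Σh = {h} that is CSNNI but not BSNNI. (A witness is the three-state automaton with transitions q₀ →ℓ q₁ and q₀ →h q₂.) -/
open Classical

def T0 : LTS (Fin 2) (Fin 3) :=
  ⟨0, fun s l s' => (s = 0 ∧ l = some 0 ∧ s' = 1) ∨ (s = 0 ∧ l = some 1 ∧ s' = 2)⟩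

lemma rtg_eq {α : Type*} {r : α → α → Prop} (h : ∀ a b, ¬ r a b) {a b : α}
    (hab : Relation.ReflTransGen r a b) : a = b := by
  induction hab with
  | refl => rfl
  | tail _ hr ih => exact absurd hr (h _ _)

lemma restrict_eps {q q' : Fin 3} :
    (T0.restrict {1}).EpsReach q q' ↔ q = q' := by
  constructor
  · intro h
    refine rtg_eq ?_ h
    rintro a b ⟨h1, h2⟩
    rcases h1 with ⟨_, h, _⟩ | ⟨_, h, _⟩ <;> simp at h
  · rintro rfl; exact Relation.ReflTransGen.refl

lemma hide_trans_none {q q' : Fin 3} :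
    (T0.hide {1}).trans q none q' ↔ q = 0 ∧ q' = 2 := by
  show (T0.trans q none q' ∨ ∃ a ∈ ({1} : Set (Fin 2)), T0.trans q (some a) q') ↔ _
  constructor
  · rintro (h | ⟨a, ha, h⟩)
    · rcases h with ⟨_, h, _⟩ | ⟨_, h, _⟩ <;> simp at h
    · simp only [Set.mem_singleton_iff] at ha; subst ha
      rcases h with ⟨_, h, _⟩ | ⟨h1, _, h2⟩
      · simp at h
      · exact ⟨h1, h2⟩
  · rintro ⟨rfl, rfl⟩
    exact Or.inr ⟨1, rfl, Or.inr ⟨rfl, rfl, rfl⟩⟩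

lemma hide_eps {q q' : Fin 3} :
    (T0.hide {1}).EpsReach q q' ↔ q = q' ∨ (q = 0 ∧ q' = 2) := by
  constructor
  · intro h
    induction h with
    | refl => exact Or.inl rfl
    | tail _ hr ih =>
      rw [hide_trans_none] at hr
      rcases ih with rfl | ⟨rfl, rfl⟩
      · exact Or.inr hr
      · exact absurd hr.1 (by decide)
  · rintro (rfl | ⟨rfl, rfl⟩)
    · exact Relation.ReflTransGen.refl
    · exact Relation.ReflTransGen.single (hide_trans_none.mpr ⟨rfl, rfl⟩)

lemma restrict_trans_some {q q' : Fin 3} {a : Fin 2} :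
    (T0.restrict {1}).trans q (some a) q' ↔ q = 0 ∧ a = 0 ∧ q' = 1 := by
  constructor
  · rintro ⟨h, hn⟩
    rcases h with ⟨h1, h2, h3⟩ | ⟨_, h2, _⟩
    · exact ⟨h1, Option.some.inj h2, h3⟩
    · exact absurd rfl (hn 1 h2)
  · rintro ⟨rfl, rfl, rfl⟩
    refine ⟨Or.inl ⟨rfl, rfl, rfl⟩, ?_⟩
    rintro b hb
    cases Option.some.inj hb
    decide

lemma hide_trans_some {q q' : Fin 3} {a : Fin 2} :
    (T0.hide {1}).trans q (some a) q' ↔ q = 0 ∧ a = 0 ∧ q' = 1 := by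
  show (a ∉ ({1} : Set (Fin 2)) ∧ T0.trans q (some a) q') ↔ _
  constructor
  · rintro ⟨hn, ⟨h1, h2, h3⟩ | ⟨_, h2, _⟩⟩
    · exact ⟨h1, Option.some.inj h2, h3⟩
    · exact absurd (Option.some.inj h2) hn
  · rintro ⟨rfl, rfl, rfl⟩
    exact ⟨by simp, Or.inl ⟨rfl, rfl, rfl⟩⟩

lemma restrict_wstep {a : Fin 2} {q q' : Fin 3} :
    (T0.restrict {1}).WStep a q q' ↔ q = 0 ∧ a = 0 ∧ q' = 1 := by
  constructor
  · rintro ⟨q1, q2, h1, h2, h3⟩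
    rw [restrict_eps] at h1 h3
    subst h1; rw [restrict_trans_some] at h2
    exact ⟨h2.1, h2.2.1, h3 ▸ h2.2.2⟩
  · rintro ⟨rfl, rfl, rfl⟩
    exact ⟨0, 1, restrict_eps.mpr rfl, restrict_trans_some.mpr ⟨rfl, rfl, rfl⟩,
      restrict_eps.mpr rfl⟩

lemma hide_wstep {a : Fin 2} {q q' : Fin 3} :
    (T0.hide {1}).WStep a q q' ↔ q = 0 ∧ a = 0 ∧ q' = 1 := by
  constructor
  · rintro ⟨q1, q2, h1, h2, h3⟩
    rw [hide_eps] at h1 h3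
    rw [hide_trans_some] at h2
    obtain ⟨rfl, rfl, rfl⟩ := h2
    rcases h1 with rfl | ⟨rfl, h⟩
    · rcases h3 with rfl | ⟨h, _⟩
      · exact ⟨rfl, rfl, rfl⟩
      · exact absurd h (by decide)
    · exact absurd h (by decide)
  · rintro ⟨rfl, rfl, rfl⟩
    exact ⟨0, 1, hide_eps.mpr (Or.inl rfl), hide_trans_some.mpr ⟨rfl, rfl, rfl⟩,
      hide_eps.mpr (Or.inl rfl)⟩

/-- Interpretation: alphabet `Fin 2` with `ℓ = 0`, `h = 1`, so `Σl = {0}` and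
`Σh = {1}`; states `Fin 3` are `q₀, q₁, q₂`. -/
theorem stmt17 :
    ∃ T : LTS (Fin 2) (Fin 3), T.Deterministic ∧
      T.CSNNI ({1} : Set (Fin 2)) ∧ ¬ T.BSNNI ({1} : Set (Fin 2)) := by
  refine ⟨T0, ?_, ?_, ?_⟩
  · constructor
    · rintro s s' (⟨_, h, _⟩ | ⟨_, h, _⟩) <;> simp at h
    · rintro s a s' s'' (⟨_, h2, h3⟩ | ⟨_, h2, h3⟩) (⟨_, g2, g3⟩ | ⟨_, g2, g3⟩) <;>
        subst h3 <;> subst g3 <;> first | rfl | (rw [h2] at g2; exact absurd g2 (by decide))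
  · constructor
    · -- restrict simulates hide
      refine ⟨fun s p => (s = 0 ∧ (p = 0 ∨ p = 2)) ∨ (s = 1 ∧ p = 1), Or.inl ⟨rfl, Or.inl rfl⟩, ?_⟩
      rintro s p (⟨rfl, hp⟩ | ⟨rfl, rfl⟩)
      · constructor
        · intro p' hp'
          rw [hide_eps] at hp'
          refine ⟨0, restrict_eps.mpr rfl, Or.inl ⟨rfl, ?_⟩⟩
          rcases hp' with rfl | ⟨rfl, rfl⟩
          · exact hp
          · exact Or.inr rfl
        · intro a p' hp'
          rw [hide_wstep] at hp'
          obtain ⟨rfl, rfl, rfl⟩ := hp'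
          exact ⟨1, restrict_wstep.mpr ⟨rfl, rfl, rfl⟩, Or.inr ⟨rfl, rfl⟩⟩
      · constructor
        · intro p' hp'
          rw [hide_eps] at hp'
          rcases hp' with rfl | ⟨h, _⟩
          · exact ⟨1, restrict_eps.mpr rfl, Or.inr ⟨rfl, rfl⟩⟩
          · exact absurd h (by decide)
        · intro a p' hp'
          rw [hide_wstep] at hp'
          exact absurd hp'.1 (by decide)
    · -- hide simulates restrict
      refine ⟨fun p s => (p = 0 ∧ s = 0) ∨ (p = 1 ∧ s = 1), Or.inl ⟨rfl, rfl⟩, ?_⟩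
      rintro p s (⟨rfl, rfl⟩ | ⟨rfl, rfl⟩)
      · constructor
        · intro s' hs'
          rw [restrict_eps] at hs'; subst hs'
          exact ⟨0, hide_eps.mpr (Or.inl rfl), Or.inl ⟨rfl, rfl⟩⟩
        · intro a s' hs'
          rw [restrict_wstep] at hs'
          obtain ⟨_, rfl, rfl⟩ := hs'
          exact ⟨1, hide_wstep.mpr ⟨rfl, rfl, rfl⟩, Or.inr ⟨rfl, rfl⟩⟩
      · constructor
        · intro s' hs'
          rw [restrict_eps] at hs'; subst hs'
          exact ⟨1, hide_eps.mpr (Or.inl rfl), Or.inr ⟨rfl, rfl⟩⟩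
        · intro a s' hs'
          rw [restrict_wstep] at hs'
          exact absurd hs'.1 (by decide)
  · rintro ⟨R, ⟨hinit, hsim⟩, _, hsim'⟩
    -- hinit : R 0 0; hide 0 ⇒ε 2, so R 0 2
    obtain ⟨s', hs', hR⟩ := (hsim _ _ hinit).1 2 (hide_eps.mpr (Or.inr ⟨rfl, rfl⟩))
    rw [restrict_eps] at hs'; subst hs'
    -- from R 0 2, restrict 0 ⇒0 1 must be matched by hide from 2
    obtain ⟨p', hp', _⟩ := (hsim' _ _ hR).2 0 1 (restrict_wstep.mpr ⟨rfl, rfl, rfl⟩)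
    rw [hide_wstep] at hp'
    exact absurd hp'.1 (by decide)
end

section
/- There is no most permissive controller for CSNNI in general: there exist a finite ε-free LTS A = (S, s₀, E) over an alphabet partitioned as Σl = {ℓ₁, ℓ₂, ℓ₃}, Σh = {h}, and two sub-LTSs A₁ = (S, s₀, E₁) and A₂ = (S, s₀, E₂) with E₁ ⊆ E, E₂ ⊆ E and E₁ ∪ E₂ = E, such that A₁ and A₂ are both CSNNI but A is not CSNNI. Consequently the set of sub-LTSs of A (same states and initial state, transition set contained in E) that are CSNNI, partially ordered by inclusion of transition sets, has no greatest element. -/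
open Classical

/-- `T'` is a sub-LTS of `T`: same states, same initial state, and the
transition set of `T'` is contained in that of `T`. -/
def SubLTS {A S : Type*} (T' T : LTS A S) : Prop :=
  T'.init = T.init ∧ ∀ s l s', T'.trans s l s' → T.trans s l s'


namespace Stmt18Aux

open LTS

def edges : List (Fin 9 × Option (Fin 4) × Fin 9) :=
  [(0, some 0, 1), (0, some 0, 2), (1, some 1, 3), (2, some 2, 4),
   (0, some 3, 5), (5, some 0, 6), (6, some 1, 7), (6, some 2, 8)]

def edges1 : List (Fin 9 × Option (Fin 4) × Fin 9) :=
  [(0, some 0, 1), (0, some 0, 2), (1, some 1, 3), (2, some 2, 4),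
   (0, some 3, 5), (5, some 0, 6), (6, some 1, 7)]

def edges2 : List (Fin 9 × Option (Fin 4) × Fin 9) :=
  [(0, some 0, 1), (0, some 0, 2), (1, some 1, 3), (2, some 2, 4),
   (0, some 3, 5), (5, some 0, 6), (6, some 2, 8)]

def mkT (l : List (Fin 9 × Option (Fin 4) × Fin 9)) : LTS (Fin 4) (Fin 9) :=
  ⟨0, fun s a s' => (s, a, s') ∈ l⟩

def T : LTS (Fin 4) (Fin 9) := mkT edges
def T1 : LTS (Fin 4) (Fin 9) := mkT edges1
def T2 : LTS (Fin 4) (Fin 9) := mkT edges2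

/-- `hide` always simulates `restrict`, via the identity relation. -/
theorem hide_simulates_restrict {A S : Type*} (X : LTS A S) (E : Set A) :
    (X.hide E).Simulates (X.restrict E) := by
  refine ⟨fun s p => s = p, rfl, ?_⟩
  intro s p hsp; subst hsp
  have mono : ∀ q q', (X.restrict E).EpsReach q q' → (X.hide E).EpsReach q q' := by
    intro q q' h
    exact Relation.ReflTransGen.mono (fun a b (hab : (X.restrict E).trans a none b) => Or.inl hab.1) _ _ h
  constructor
  · intro p' hp'; exact ⟨p', mono _ _ hp', rfl⟩
  · rintro a p' ⟨q1, q2, h1, h2, h3⟩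
    exact ⟨p', ⟨q1, q2, mono _ _ h1, ⟨h2.2 a rfl, h2.1⟩, mono _ _ h3⟩, rfl⟩

theorem epsReach_of_epsFree {A S : Type*} {X : LTS A S} (h : X.EpsFree)
    (p p' : S) : X.EpsReach p p' ↔ p' = p := by
  constructor
  · intro hr
    induction hr with
    | refl => rfl
    | tail _ hstep _ => exact absurd hstep (h _ _)
  · rintro rfl; exact Relation.ReflTransGen.refl

theorem epsReach_char {X : LTS (Fin 4) (Fin 9)}
    (h : ∀ p p', X.trans p none p' ↔ (p = 0 ∧ p' = 5))
    (p p' : Fin 9) : X.EpsReach p p' ↔ (p' = p ∨ (p = 0 ∧ p' = 5)) := by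
  constructor
  · intro hr
    induction hr with
    | refl => exact Or.inl rfl
    | tail _ hstep ih =>
      obtain ⟨hb, hc⟩ := (h _ _).1 hstep
      rcases ih with h1 | ⟨h1, h2⟩
      · subst h1; exact Or.inr ⟨hb, hc⟩
      · subst h2; exact absurd hb (by decide)
  · rintro (rfl | ⟨rfl, rfl⟩)
    · exact Relation.ReflTransGen.refl
    · exact Relation.ReflTransGen.single ((h _ _).2 ⟨rfl, rfl⟩)

/-- A sufficient condition for `IsWeakSimOf` expressed through characterizations
of `EpsReach` and of the labelled transitions, decidable when everything is. -/
theorem isWeakSimOf_of {A : Type*} {U1 U2 : LTS A (Fin 9)}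
    {f1 f2 : Fin 9 → Fin 9 → Prop} {g1 g2 : Fin 9 → A → Fin 9 → Prop}
    (h1 : ∀ p p', U1.EpsReach p p' ↔ f1 p p')
    (h2 : ∀ p p', U2.EpsReach p p' ↔ f2 p p')
    (k1 : ∀ q a q', U1.trans q (some a) q' ↔ g1 q a q')
    (k2 : ∀ q a q', U2.trans q (some a) q' ↔ g2 q a q')
    (R : Fin 9 → Fin 9 → Prop)
    (Hinit : R U1.init U2.init)
    (Heps : ∀ s p, R s p → ∀ p', f2 p p' → ∃ s', f1 s s' ∧ R s' p')
    (Hstep : ∀ a : A, ∀ s p, R s p → ∀ q1 q2 p', f2 p q1 → g2 q1 a q2 → f2 q2 p' →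
          ∃ s', (∃ r1 r2, f1 s r1 ∧ g1 r1 a r2 ∧ f1 r2 s') ∧ R s' p') :
    U1.IsWeakSimOf U2 R := by
  refine ⟨Hinit, fun s p hsp => ⟨?_, ?_⟩⟩
  · intro p' hp'
    obtain ⟨s', hf, hR⟩ := Heps s p hsp p' ((h2 p p').1 hp')
    exact ⟨s', (h1 s s').2 hf, hR⟩
  · rintro a p' ⟨q1, q2, hq1, hq2, hq3⟩
    obtain ⟨s', ⟨r1, r2, hr1, hr2, hr3⟩, hR⟩ :=
      Hstep a s p hsp q1 q2 p' ((h2 _ _).1 hq1) ((k2 _ _ _).1 hq2) ((h2 _ _).1 hq3)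
    exact ⟨s', ⟨r1, r2, (h1 _ _).2 hr1, (k1 _ _ _).2 hr2, (h1 _ _).2 hr3⟩, hR⟩

-- characterizations for the three LTSs

theorem T_epsFree : T.EpsFree := by
  intro s s'
  show ¬ ((s, (none : Option (Fin 4)), s') ∈ edges)
  revert s s'; decide

theorem T1_epsFree : T1.EpsFree := by
  intro s s'
  show ¬ ((s, (none : Option (Fin 4)), s') ∈ edges1)
  revert s s'; decide

theorem T2_epsFree : T2.EpsFree := by
  intro s s'
  show ¬ ((s, (none : Option (Fin 4)), s') ∈ edges2)
  revert s s'; decide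

theorem restrict_epsFree {A S : Type*} {X : LTS A S} (h : X.EpsFree) (E : Set A) :
    (X.restrict E).EpsFree := fun s s' hs => h s s' hs.1

theorem hide_none_char {X : LTS (Fin 4) (Fin 9)} (hX : X.EpsFree)
    (h3 : ∀ p p', X.trans p (some 3) p' ↔ (p = 0 ∧ p' = 5)) :
    ∀ p p', (X.hide ({3} : Set (Fin 4))).trans p none p' ↔ (p = 0 ∧ p' = 5) := by
  intro p p'
  show (X.trans p none p' ∨ ∃ a ∈ ({3} : Set (Fin 4)), X.trans p (some a) p') ↔ _
  constructor
  · rintro (h | ⟨a, ha, h⟩)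
    · exact absurd h (hX _ _)
    · rw [Set.mem_singleton_iff] at ha; subst ha; exact (h3 _ _).1 h
  · intro h
    exact Or.inr ⟨3, rfl, (h3 _ _).2 h⟩

theorem h3_char_T : ∀ p p', T.trans p (some 3) p' ↔ (p = 0 ∧ p' = 5) := by
  intro p p'
  show ((p, some 3, p') ∈ edges) ↔ _
  revert p p'; decide

theorem h3_char_T1 : ∀ p p', T1.trans p (some 3) p' ↔ (p = 0 ∧ p' = 5) := by
  intro p p'
  show ((p, some 3, p') ∈ edges1) ↔ _
  revert p p'; decide

theorem h3_char_T2 : ∀ p p', T2.trans p (some 3) p' ↔ (p = 0 ∧ p' = 5) := by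
  intro p p'
  show ((p, some 3, p') ∈ edges2) ↔ _
  revert p p'; decide

theorem restrict_some_char (l : List (Fin 9 × Option (Fin 4) × Fin 9)) :
    ∀ q a q', ((mkT l).restrict ({3} : Set (Fin 4))).trans q (some a) q' ↔
      ((q, some a, q') ∈ l ∧ a ≠ 3) := by
  intro q a q'
  show ((q, some a, q') ∈ l ∧ ∀ b, some a = some b → b ∉ ({3} : Set (Fin 4))) ↔ _
  constructor
  · rintro ⟨h, hb⟩
    refine ⟨h, fun hc => hb a rfl ?_⟩
    rw [Set.mem_singleton_iff]; exact hc
  · rintro ⟨h, hb⟩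
    refine ⟨h, fun b hab hbc => ?_⟩
    cases hab
    rw [Set.mem_singleton_iff] at hbc; exact hb hbc

theorem hide_some_char (l : List (Fin 9 × Option (Fin 4) × Fin 9)) :
    ∀ q a q', ((mkT l).hide ({3} : Set (Fin 4))).trans q (some a) q' ↔
      (a ≠ 3 ∧ (q, some a, q') ∈ l) := by
  intro q a q'
  show (a ∉ ({3} : Set (Fin 4)) ∧ (q, some a, q') ∈ l) ↔ _
  rw [Set.mem_singleton_iff]

-- the eps-reach functions

abbrev fId : Fin 9 → Fin 9 → Prop := fun p p' => p' = p
abbrev fH : Fin 9 → Fin 9 → Prop := fun p p' => p' = p ∨ (p = 0 ∧ p' = 5)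

theorem restrict_eps_char (l : List (Fin 9 × Option (Fin 4) × Fin 9))
    (h : (mkT l).EpsFree) :
    ∀ p p', ((mkT l).restrict ({3} : Set (Fin 4))).EpsReach p p' ↔ fId p p' :=
  epsReach_of_epsFree (restrict_epsFree h _)

-- simulation relations

abbrev RId : Fin 9 → Fin 9 → Prop := fun s p => s = p
abbrev R1 : Fin 9 → Fin 9 → Prop := fun s p =>
  (s, p) ∈ ([(0,0),(1,1),(2,2),(3,3),(4,4),(5,5),(6,6),(7,7),(8,8),
             (0,5),(1,6),(3,7)] : List (Fin 9 × Fin 9))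
abbrev R2 : Fin 9 → Fin 9 → Prop := fun s p =>
  (s, p) ∈ ([(0,0),(1,1),(2,2),(3,3),(4,4),(5,5),(6,6),(7,7),(8,8),
             (0,5),(2,6),(4,8)] : List (Fin 9 × Fin 9))

set_option synthInstance.maxSize 2000 in
set_option synthInstance.maxHeartbeats 1000000 in
set_option maxHeartbeats 2000000 in
theorem T1_CSNNI : T1.CSNNI ({3} : Set (Fin 4)) := by
  constructor
  · refine ⟨R1, isWeakSimOf_of
      (restrict_eps_char edges1 T1_epsFree)
      (epsReach_char (hide_none_char T1_epsFree h3_char_T1))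
      (restrict_some_char edges1)
      (hide_some_char edges1) R1 ?_ ?_ ?_⟩
    · decide
    · decide
    · intro a
      fin_cases a <;> decide
  · exact hide_simulates_restrict T1 _

set_option synthInstance.maxSize 2000 in
set_option synthInstance.maxHeartbeats 1000000 in
set_option maxHeartbeats 2000000 in
theorem T2_CSNNI : T2.CSNNI ({3} : Set (Fin 4)) := by
  constructor
  · refine ⟨R2, isWeakSimOf_of
      (restrict_eps_char edges2 T2_epsFree)
      (epsReach_char (hide_none_char T2_epsFree h3_char_T2))
      (restrict_some_char edges2)
      (hide_some_char edges2) R2 ?_ ?_ ?_⟩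
    · decide
    · decide
    · intro a
      fin_cases a <;> decide
  · exact hide_simulates_restrict T2 _

theorem mem00 : ∀ t : Fin 9, (0, some 0, t) ∈ edges → t = 1 ∨ t = 2 := by decide

theorem mem12 : ∀ t : Fin 9, (1, some 2, t) ∈ edges → False := by decide

theorem mem21 : ∀ t : Fin 9, (2, some 1, t) ∈ edges → False := by decide

theorem T_not_CSNNI : ¬ T.CSNNI ({3} : Set (Fin 4)) := by
  rintro ⟨⟨R, hinit, hsim⟩, -⟩
  have hre : ∀ p p', (T.restrict ({3} : Set (Fin 4))).EpsReach p p' ↔ fId p p' :=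
    restrict_eps_char edges T_epsFree
  have hhe : ∀ p p', (T.hide ({3} : Set (Fin 4))).EpsReach p p' ↔ fH p p' :=
    epsReach_char (hide_none_char T_epsFree h3_char_T)
  -- R 0 0 at initial states
  have h00 : R 0 0 := hinit
  -- hide can silently reach 5
  have h05 : (T.hide ({3} : Set (Fin 4))).EpsReach 0 5 := (hhe 0 5).2 (Or.inr ⟨rfl, rfl⟩)
  obtain ⟨s', hs', hR05⟩ := (hsim 0 0 h00).1 5 h05
  have : s' = 0 := (hre 0 s').1 hs'
  subst this
  -- hide does a weak ℓ1-step from 5 to 6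
  have hw : (T.hide ({3} : Set (Fin 4))).WStep 0 5 6 := by
    refine ⟨5, 6, Relation.ReflTransGen.refl, ?_, Relation.ReflTransGen.refl⟩
    show (0 : Fin 4) ∉ ({3} : Set (Fin 4)) ∧ (5, some 0, 6) ∈ edges
    exact ⟨by rw [Set.mem_singleton_iff]; decide, by decide⟩
  obtain ⟨t, htw, hRt6⟩ := (hsim 0 5 hR05).2 0 6 hw
  -- the matching state t must be 1 or 2
  obtain ⟨q1, q2, hq1, hq2, hq3⟩ := htw
  have hq1' : q1 = 0 := (hre 0 q1).1 hq1
  subst hq1'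
  have hq3' : t = q2 := (hre q2 t).1 hq3
  subst hq3'
  have hmem : (0, some 0, t) ∈ edges ∧ (0:Fin 4) ≠ 3 := (restrict_some_char edges 0 0 t).1 hq2
  have ht12 : t = 1 ∨ t = 2 := mem00 t hmem.1
  -- hide does weak ℓ2 and ℓ3 steps from 6
  have hw2 : (T.hide ({3} : Set (Fin 4))).WStep 1 6 7 := by
    refine ⟨6, 7, Relation.ReflTransGen.refl, ?_, Relation.ReflTransGen.refl⟩
    show (1 : Fin 4) ∉ ({3} : Set (Fin 4)) ∧ (6, some 1, 7) ∈ edges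
    exact ⟨by rw [Set.mem_singleton_iff]; decide, by decide⟩
  have hw3 : (T.hide ({3} : Set (Fin 4))).WStep 2 6 8 := by
    refine ⟨6, 8, Relation.ReflTransGen.refl, ?_, Relation.ReflTransGen.refl⟩
    show (2 : Fin 4) ∉ ({3} : Set (Fin 4)) ∧ (6, some 2, 8) ∈ edges
    exact ⟨by rw [Set.mem_singleton_iff]; decide, by decide⟩
  rcases ht12 with rfl | rfl
  · -- t = 1 cannot match ℓ3
    obtain ⟨u, huw, -⟩ := (hsim 1 6 hRt6).2 2 8 hw3
    obtain ⟨q1, q2, hq1, hq2, -⟩ := huw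
    have hq1' : q1 = 1 := (hre 1 q1).1 hq1
    subst hq1'
    exact mem12 q2 ((restrict_some_char edges 1 2 q2).1 hq2).1
  · -- t = 2 cannot match ℓ2
    obtain ⟨u, huw, -⟩ := (hsim 2 6 hRt6).2 1 7 hw2
    obtain ⟨q1, q2, hq1, hq2, -⟩ := huw
    have hq1' : q1 = 2 := (hre 2 q1).1 hq1
    subst hq1'
    exact mem21 q2 ((restrict_some_char edges 2 1 q2).1 hq2).1

end Stmt18Aux

/-- Interpretation: alphabet `Fin 4` with `ℓ₁ = 0`, `ℓ₂ = 1`, `ℓ₃ = 2`, `h = 3`,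
so `Σl = {0, 1, 2}` and `Σh = {3}`; states `Fin 9`. -/
theorem stmt18 :
    ∃ T T1 T2 : LTS (Fin 4) (Fin 9),
      T.EpsFree ∧ SubLTS T1 T ∧ SubLTS T2 T ∧
      (∀ s l s', T.trans s l s' ↔ T1.trans s l s' ∨ T2.trans s l s') ∧
      T1.CSNNI ({3} : Set (Fin 4)) ∧ T2.CSNNI ({3} : Set (Fin 4)) ∧
      ¬ T.CSNNI ({3} : Set (Fin 4)) ∧
      ¬ ∃ Tm : LTS (Fin 4) (Fin 9), SubLTS Tm T ∧ Tm.CSNNI ({3} : Set (Fin 4)) ∧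
          ∀ T' : LTS (Fin 4) (Fin 9), SubLTS T' T → T'.CSNNI ({3} : Set (Fin 4)) →
            ∀ s l s', T'.trans s l s' → Tm.trans s l s' := by
  classical
  refine ⟨Stmt18Aux.T, Stmt18Aux.T1, Stmt18Aux.T2, Stmt18Aux.T_epsFree, ?_, ?_, ?_,
    Stmt18Aux.T1_CSNNI, Stmt18Aux.T2_CSNNI, Stmt18Aux.T_not_CSNNI, ?_⟩
  · refine ⟨rfl, fun s l s' h => ?_⟩
    revert h
    show (s, l, s') ∈ Stmt18Aux.edges1 → (s, l, s') ∈ Stmt18Aux.edges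
    revert s l s'; decide
  · refine ⟨rfl, fun s l s' h => ?_⟩
    revert h
    show (s, l, s') ∈ Stmt18Aux.edges2 → (s, l, s') ∈ Stmt18Aux.edges
    revert s l s'; decide
  · intro s l s'
    show (s, l, s') ∈ Stmt18Aux.edges ↔
      (s, l, s') ∈ Stmt18Aux.edges1 ∨ (s, l, s') ∈ Stmt18Aux.edges2
    revert s l s'; decide
  · rintro ⟨Tm, ⟨hmi, hms⟩, hmc, hmax⟩
    have sub1 : SubLTS Stmt18Aux.T1 Stmt18Aux.T := by
      refine ⟨rfl, fun s l s' h => ?_⟩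
      revert h
      show (s, l, s') ∈ Stmt18Aux.edges1 → (s, l, s') ∈ Stmt18Aux.edges
      revert s l s'; decide
    have sub2 : SubLTS Stmt18Aux.T2 Stmt18Aux.T := by
      refine ⟨rfl, fun s l s' h => ?_⟩
      revert h
      show (s, l, s') ∈ Stmt18Aux.edges2 → (s, l, s') ∈ Stmt18Aux.edges
      revert s l s'; decide
    have hiff : ∀ s l s', Stmt18Aux.T.trans s l s' ↔
        Stmt18Aux.T1.trans s l s' ∨ Stmt18Aux.T2.trans s l s' := by
      intro s l s'
      show (s, l, s') ∈ Stmt18Aux.edges ↔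
        (s, l, s') ∈ Stmt18Aux.edges1 ∨ (s, l, s') ∈ Stmt18Aux.edges2
      revert s l s'; decide
    have htr : Tm.trans = Stmt18Aux.T.trans := by
      funext s l s'
      apply propext
      constructor
      · exact hms s l s'
      · intro h
        rcases (hiff s l s').1 h with h | h
        · exact hmax Stmt18Aux.T1 sub1 Stmt18Aux.T1_CSNNI s l s' h
        · exact hmax Stmt18Aux.T2 sub2 Stmt18Aux.T2_CSNNI s l s' h
    have hTm : Tm = Stmt18Aux.T := by
      rw [show Tm = (⟨Tm.init, Tm.trans⟩ : LTS (Fin 4) (Fin 9)) from rfl, hmi, htr]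
    rw [hTm] at hmc
    exact Stmt18Aux.T_not_CSNNI hmc
end

section
/- There is no most permissive controller for BSNNI even for deterministic finite systems: there exist a finite deterministic LTS A = (S, s₀, E) over an alphabet partitioned as Σl = {ℓ}, Σh = {h} (namely the automaton with transitions q₀ →ℓ q₁ and q₀ →h q₂), and two sub-LTSs A₁ = (S, s₀, E₁) and A₂ = (S, s₀, E₂) with E₁ ⊆ E, E₂ ⊆ E and E₁ ∪ E₂ = E, such that A₁ and A₂ are both BSNNI but A is not BSNNI. Consequently the set of sub-LTSs of A that are BSNNI, partially ordered by inclusion of transition sets, has no greatest element. -/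
open Classical

section Aux

variable {A S : Type*}

/-- In an ε-free LTS, ε-reachability collapses to equality. -/
lemma epsReach_eq_of_epsFree {T : LTS A S} (h : ∀ s s', ¬ T.trans s none s')
    {s s' : S} (hr : T.EpsReach s s') : s = s' := by
  induction hr with
  | refl => rfl
  | tail _ hstep _ => exact absurd hstep (h _ _)

/-- Two LTSs with the same init and equivalent transition relations are bisimilar. -/
lemma bisim_of_equiv {T1 T2 : LTS A S} (hinit : T1.init = T2.init)
    (htrans : ∀ s l s', T1.trans s l s' ↔ T2.trans s l s') : T1.Bisimilar T2 := by
  have heps : ∀ s s', T2.EpsReach s s' → T1.EpsReach s s' := fun s s' h =>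
    Relation.ReflTransGen.mono (fun a b hab => (htrans a none b).2 hab) _ _ h
  have heps' : ∀ s s', T1.EpsReach s s' → T2.EpsReach s s' := fun s s' h =>
    Relation.ReflTransGen.mono (fun a b hab => (htrans a none b).1 hab) _ _ h
  refine ⟨Eq, ⟨hinit, ?_⟩, ⟨hinit, ?_⟩⟩
  · rintro s p rfl
    refine ⟨fun p' hp' => ⟨p', heps _ _ hp', rfl⟩, ?_⟩
    rintro a p' ⟨q1, q2, h1, h2, h3⟩
    exact ⟨p', ⟨q1, q2, heps _ _ h1, (htrans _ _ _).2 h2, heps _ _ h3⟩, rfl⟩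
  · rintro p s rfl
    refine ⟨fun p' hp' => ⟨p', heps' _ _ hp', rfl⟩, ?_⟩
    rintro a p' ⟨q1, q2, h1, h2, h3⟩
    exact ⟨p', ⟨q1, q2, heps' _ _ h1, (htrans _ _ _).1 h2, heps' _ _ h3⟩, rfl⟩

end Aux

/-- Interpretation: alphabet `Fin 2` with `ℓ = 0`, `h = 1`, so `Σl = {0}` and
`Σh = {1}`; states `Fin 3` are `q₀, q₁, q₂`. -/
theorem stmt19 :
    ∃ T T1 T2 : LTS (Fin 2) (Fin 3),
      T.Deterministic ∧
      (T.trans = fun s l s' => (s = 0 ∧ l = some 0 ∧ s' = 1) ∨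
        (s = 0 ∧ l = some 1 ∧ s' = 2)) ∧
      SubLTS T1 T ∧ SubLTS T2 T ∧
      (∀ s l s', T.trans s l s' ↔ T1.trans s l s' ∨ T2.trans s l s') ∧
      T1.BSNNI ({1} : Set (Fin 2)) ∧ T2.BSNNI ({1} : Set (Fin 2)) ∧
      ¬ T.BSNNI ({1} : Set (Fin 2)) ∧
      ¬ ∃ Tm : LTS (Fin 2) (Fin 3), SubLTS Tm T ∧ Tm.BSNNI ({1} : Set (Fin 2)) ∧
          ∀ T' : LTS (Fin 2) (Fin 3), SubLTS T' T → T'.BSNNI ({1} : Set (Fin 2)) →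
            ∀ s l s', T'.trans s l s' → Tm.trans s l s' := by
  set T : LTS (Fin 2) (Fin 3) :=
    ⟨0, fun s l s' => (s = 0 ∧ l = some 0 ∧ s' = 1) ∨ (s = 0 ∧ l = some 1 ∧ s' = 2)⟩ with hT
  set T1 : LTS (Fin 2) (Fin 3) := ⟨0, fun s l s' => s = 0 ∧ l = some 0 ∧ s' = 1⟩ with hT1
  set T2 : LTS (Fin 2) (Fin 3) := ⟨0, fun s l s' => s = 0 ∧ l = some 1 ∧ s' = 2⟩ with hT2
  have hnotB : ¬ T.BSNNI ({1} : Set (Fin 2)) := by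
    rintro ⟨R, ⟨hinit1, hstep1⟩, ⟨hinit2, hstep2⟩⟩
    -- hide has ε-step 0 → 2
    have hε : (T.hide {1}).EpsReach 0 2 := by
      refine Relation.ReflTransGen.single ?_
      exact Or.inr ⟨1, rfl, Or.inr ⟨rfl, rfl, rfl⟩⟩
    -- restrict is ε-free
    have hrf : ∀ s s', ¬ (T.restrict {1}).trans s none s' := by
      rintro s s' ⟨h, -⟩
      rcases h with ⟨-, h, -⟩ | ⟨-, h, -⟩ <;> exact nomatch h
    obtain ⟨s', hs', hR⟩ := (hstep1 _ _ hinit1).1 2 hε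
    have : (0 : Fin 3) = s' := epsReach_eq_of_epsFree hrf hs'
    subst this
    -- restrict has weak step labelled 0 from 0 to 1
    have hw : (T.restrict {1}).WStep 0 0 1 := by
      refine ⟨0, 1, Relation.ReflTransGen.refl, ⟨Or.inl ⟨rfl, rfl, rfl⟩, ?_⟩,
        Relation.ReflTransGen.refl⟩
      rintro a ha h1
      injection ha with ha; subst ha
      exact absurd h1 (by decide)
    obtain ⟨t', ht', -⟩ := (hstep2 _ _ hR).2 0 1 hw
    obtain ⟨q1, q2, hq1, hq2, -⟩ := ht'
    -- ε-reach in hide from 2 stays at 2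
    have h2q1 : (2 : Fin 3) = q1 := by
      clear hq2
      induction hq1 with
      | refl => rfl
      | tail _ hstep ih =>
        rcases hstep with h | ⟨a, -, h⟩
        · rcases h with ⟨-, h, -⟩ | ⟨-, h, -⟩ <;> exact nomatch h
        · rcases h with ⟨h, -, -⟩ | ⟨h, -, -⟩ <;> simp [← ih] at h
    rcases hq2 with ⟨-, h⟩
    rcases h with ⟨h, -, -⟩ | ⟨h, -, -⟩ <;> simp [← h2q1] at h
  refine ⟨T, T1, T2, ?_, rfl, ⟨rfl, fun s l s' h => Or.inl h⟩,
    ⟨rfl, fun s l s' h => Or.inr h⟩, fun s l s' => Iff.rfl, ?_, ?_, hnotB, ?_⟩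
  · constructor
    · rintro s s' (⟨-, h, -⟩ | ⟨-, h, -⟩) <;> exact nomatch h
    · rintro s a s' s'' (⟨-, h1, h2⟩ | ⟨-, h1, h2⟩) (⟨-, h3, h4⟩ | ⟨-, h3, h4⟩) <;>
        simp_all
  · -- T1 is BSNNI: restrict and hide coincide
    refine bisim_of_equiv rfl ?_
    rintro s (_ | a) s'
    · simp only [LTS.restrict, LTS.hide, hT1]
      constructor
      · rintro ⟨⟨-, h, -⟩, -⟩; exact nomatch h
      · rintro (⟨-, h, -⟩ | ⟨a, ha, -, h, -⟩)
        · exact nomatch h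
        · injection h with h
          simp_all
    · simp only [LTS.restrict, LTS.hide, hT1]
      constructor
      · rintro ⟨⟨h1, h2, h3⟩, h4⟩
        injection h2 with h2; subst h2
        exact ⟨by decide, h1, rfl, h3⟩
      · rintro ⟨ha, h1, h2, h3⟩
        injection h2 with h2; subst h2
        exact ⟨⟨h1, rfl, h3⟩, fun b hb => by injection hb with hb; subst hb; exact ha⟩
  · -- T2 is BSNNI: restrict has no steps, hide only ε-steps
    refine ⟨fun _ _ => True, ⟨trivial, ?_⟩, ⟨trivial, ?_⟩⟩
    · rintro s p -
      refine ⟨fun p' _ => ⟨s, Relation.ReflTransGen.refl, trivial⟩, ?_⟩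
      rintro a p' ⟨q1, q2, -, hq2, -⟩
      rcases hq2 with ⟨ha, -, h, -⟩
      injection h with h; subst h
      exact absurd rfl ha
    · rintro p s -
      refine ⟨fun p' _ => ⟨p, Relation.ReflTransGen.refl, trivial⟩, ?_⟩
      rintro a p' ⟨q1, q2, -, hq2, -⟩
      rcases hq2 with ⟨⟨-, h, -⟩, hres⟩
      injection h with h; subst h
      exact absurd rfl (hres 1 rfl)
  · rintro ⟨Tm, ⟨hi, hsub⟩, hB, hmax⟩
    have h1 := hmax T1 ⟨rfl, fun s l s' h => Or.inl h⟩ ?_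
    · have h2 := hmax T2 ⟨rfl, fun s l s' h => Or.inr h⟩ ?_
      · have : Tm = T := by
          obtain ⟨i, tr⟩ := Tm
          rw [hT]
          simp only [LTS.mk.injEq]
          refine ⟨hi, ?_⟩
          funext s l s'
          refine propext ⟨fun h => hsub s l s' h, fun h => ?_⟩
          rcases h with h | h
          · exact h1 s l s' h
          · exact h2 s l s' h
        rw [this] at hB
        exact hnotB hB
      · refine ⟨fun _ _ => True, ⟨trivial, ?_⟩, ⟨trivial, ?_⟩⟩
        · rintro s p -
          refine ⟨fun p' _ => ⟨s, Relation.ReflTransGen.refl, trivial⟩, ?_⟩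
          rintro a p' ⟨q1, q2, -, hq2, -⟩
          rcases hq2 with ⟨ha, -, h, -⟩
          injection h with h; subst h
          exact absurd rfl ha
        · rintro p s -
          refine ⟨fun p' _ => ⟨p, Relation.ReflTransGen.refl, trivial⟩, ?_⟩
          rintro a p' ⟨q1, q2, -, hq2, -⟩
          rcases hq2 with ⟨⟨-, h, -⟩, hres⟩
          injection h with h; subst h
          exact absurd rfl (hres 1 rfl)
    · refine bisim_of_equiv rfl ?_
      rintro s (_ | a) s'
      · simp only [LTS.restrict, LTS.hide, hT1]
        constructor
        · rintro ⟨⟨-, h, -⟩, -⟩; exact nomatch h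
        · rintro (⟨-, h, -⟩ | ⟨a, ha, -, h, -⟩)
          · exact nomatch h
          · injection h with h
            simp_all
      · simp only [LTS.restrict, LTS.hide, hT1]
        constructor
        · rintro ⟨⟨h1, h2, h3⟩, h4⟩
          injection h2 with h2; subst h2
          exact ⟨by decide, h1, rfl, h3⟩
        · rintro ⟨ha, h1, h2, h3⟩
          injection h2 with h2; subst h2
          exact ⟨⟨h1, rfl, h3⟩, fun b hb => by injection hb with hb; subst hb; exact ha⟩
end
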